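/- arXiv:1808.00851 — 7 statements merged into one kernel-verified Lean document; each statement's English description precedes it below -/
import Mathlib

section
/- Let 0 < ζ < 1 and let H be a graph that has no ζ-sparse cut. Then for every set R ⊆ V(H) with |R| ≤ (ζ/6)·|V(H)| and every pair of distinct vertices x, y ∈ V(H) \ R, there exists a path in H − R (the subgraph induced on V(H) \ R) of length at most 3/ζ with ends x and y. -/
/-!
Let `Bₙ` be the ball of radius `n` around a vertex in `H − R` and `N = |V(H)|`. As `H` has no
`ζ`-sparse cut, more than `ζ |Bₙ| (N - |Bₙ|)` edges leave `Bₙ`, and each of them ends in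
`Bₙ₊₁ \ Bₙ` or in `R`; so `|Bₙ₊₁| - |Bₙ| ≥ ζ (N - |Bₙ|) - |R|`, i.e. `N - |R|/ζ - |Bₙ|` decays
like `(1 - ζ)ⁿ`. For `k = ⌊3/(2ζ)⌋` we have `(1 - ζ)ᵏ ≤ 2/5`, and together with `|R| ≤ ζN/6`
this makes the balls of radius `k` around `x` and `y` too large to be disjoint in `V \ R`.
A common vertex yields a path of length at most `2k ≤ 3/ζ`.
-/

open SimpleGraph

/-- The number of edges of `G` with one end in `X` and one end in `Y`
(intended for disjoint `X`, `Y`). -/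
noncomputable def ebtw {V : Type*} (G : SimpleGraph V) (X Y : Set V) : ℕ :=
  {e : Sym2 V | e ∈ G.edgeSet ∧ ∃ x ∈ X, ∃ y ∈ Y, e = s(x, y)}.ncard

/-- `A` has an `α`-sparse cut in `G`. -/
def HasSparseCut {V : Type*} (G : SimpleGraph V) (A : Set V) (α : ℝ) : Prop :=
  ∃ X Y : Set V, X ∪ Y = A ∧ Disjoint X Y ∧ X.Nonempty ∧ Y.Nonempty ∧
    (ebtw G X Y : ℝ) ≤ α * X.ncard * Y.ncard

section SparseCut

variable {V : Type*} [Finite V] {G : SimpleGraph V}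

lemma ebtw_le_ncard_mul_ncard {X Y T : Set V} (hT : ∀ x ∈ X, ∀ y ∈ Y, G.Adj x y → y ∈ T) :
    ebtw G X Y ≤ X.ncard * T.ncard := by
  have hsub : {e : Sym2 V | e ∈ G.edgeSet ∧ ∃ x ∈ X, ∃ y ∈ Y, e = s(x, y)} ⊆
      (fun p : V × V => s(p.1, p.2)) '' (X ×ˢ T) := by
    rintro e ⟨he, x, hx, y, hy, rfl⟩
    exact ⟨(x, y), ⟨hx, hT x hx y hy he⟩, rfl⟩
  calc ebtw G X Y ≤ ((fun p : V × V => s(p.1, p.2)) '' (X ×ˢ T)).ncard :=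
        Set.ncard_le_ncard hsub
    _ ≤ (X ×ˢ T).ncard := Set.ncard_image_le (Set.toFinite _)
    _ = X.ncard * T.ncard := Set.ncard_prod

lemma mul_ncard_compl_le_of_not_hasSparseCut {α : ℝ} (hG : ¬ HasSparseCut G Set.univ α)
    {B T : Set V} (hB : B.Nonempty) (hT : ∀ u ∈ B, ∀ v ∉ B, G.Adj u v → v ∈ T) :
    α * Bᶜ.ncard ≤ T.ncard := by
  rcases Bᶜ.eq_empty_or_nonempty with hc | hc
  · simp [hc]
  have hcut : α * B.ncard * Bᶜ.ncard < ebtw G B Bᶜ :=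
    not_le.1 fun h => hG ⟨B, Bᶜ, Set.union_compl_self B, disjoint_compl_right, hB, hc, h⟩
  have hedges : (ebtw G B Bᶜ : ℝ) ≤ B.ncard * T.ncard := by
    exact_mod_cast ebtw_le_ncard_mul_ncard hT
  have hB0 : (0 : ℝ) ≤ B.ncard := Nat.cast_nonneg _
  exact (lt_of_mul_lt_mul_left (by linarith) hB0).le

lemma ncard_growth_of_not_hasSparseCut {ζ : ℝ} (hG : ¬ HasSparseCut G Set.univ ζ)
    {B B' R : Set V} (hB : B.Nonempty) (hBB' : B ⊆ B')
    (hadj : ∀ u ∈ B, ∀ v, G.Adj u v → v ∈ B' ∨ v ∈ R) :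
    ζ * (Nat.card V - B.ncard) - R.ncard ≤ (B'.ncard : ℝ) - B.ncard := by
  have hT : ∀ u ∈ B, ∀ v ∉ B, G.Adj u v → v ∈ (B' \ B) ∪ R := fun u hu v hv huv =>
    (hadj u hu v huv).imp (fun h => ⟨h, hv⟩) id
  have hcompl : (Bᶜ.ncard : ℝ) = Nat.card V - B.ncard := by
    rw [← Set.ncard_add_ncard_compl B]; push_cast; ring
  have hunion : (((B' \ B) ∪ R).ncard : ℝ) ≤ B'.ncard - B.ncard + R.ncard := by
    have hsplit := Set.ncard_sdiff_add_ncard_of_subset hBB'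
    have hle : (((B' \ B) ∪ R).ncard : ℝ) ≤ (B' \ B).ncard + R.ncard := by
      exact_mod_cast Set.ncard_union_le (B' \ B) R
    have : ((B' \ B).ncard : ℝ) + B.ncard = B'.ncard := by exact_mod_cast hsplit
    linarith
  have := mul_ncard_compl_le_of_not_hasSparseCut hG hB hT
  rw [hcompl] at this
  linarith

lemma sub_le_pow_mul_of_not_hasSparseCut {ζ : ℝ} (hζ0 : 0 ≤ ζ) (hζ1 : ζ ≤ 1)
    (hG : ¬ HasSparseCut G Set.univ ζ) {R : Set V} {B : ℕ → Set V} (h0 : (B 0).Nonempty)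
    (hmono : Monotone B) (hadj : ∀ n, ∀ u ∈ B n, ∀ v, G.Adj u v → v ∈ B (n + 1) ∨ v ∈ R)
    (n : ℕ) :
    ζ * (Nat.card V - (B n).ncard) - R.ncard ≤
      (1 - ζ) ^ n * (ζ * (Nat.card V - 1) - R.ncard) := by
  set D : ℕ → ℝ := fun n => ζ * (Nat.card V - (B n).ncard) - R.ncard
  have hstep : ∀ k < n, D (k + 1) ≤ (1 - ζ) * D k := fun k _ => by
    have hgrow := ncard_growth_of_not_hasSparseCut hG (h0.mono (hmono k.zero_le))
      (hmono k.le_succ) (hadj k)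
    have := mul_le_mul_of_nonneg_left hgrow hζ0
    simp only [D]
    linarith
  have hD0 : D 0 ≤ ζ * (Nat.card V - 1) - R.ncard := by
    have : (1 : ℝ) ≤ (B 0).ncard := by exact_mod_cast (Set.ncard_pos).2 h0
    simp only [D]
    nlinarith
  calc D n ≤ (1 - ζ) ^ n * D 0 := le_geom (by linarith) n hstep
    _ ≤ _ := mul_le_mul_of_nonneg_left hD0 (pow_nonneg (by linarith) n)

end SparseCut

lemma one_sub_pow_floor_le {ζ : ℝ} (hζ0 : 0 < ζ) (hζ1 : ζ ≤ 1) :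
    (1 - ζ) ^ ⌊3 / (2 * ζ)⌋₊ ≤ 2 / 5 := by
  set k := ⌊3 / (2 * ζ)⌋₊
  have hk : 3 / (2 * ζ) < k + 1 := Nat.lt_floor_add_one _
  have hkζ : 3 / 2 < (k + 1) * ζ := by
    rw [div_lt_iff₀ (by positivity)] at hk; linarith
  rcases le_or_gt ζ (2 / 5) with hζ | hζ
  · calc (1 - ζ) ^ k ≤ Real.exp (-ζ) ^ k :=
          pow_le_pow_left₀ (by linarith) (Real.one_sub_le_exp_neg ζ) k
      _ = Real.exp (-(k * ζ)) := by rw [← Real.exp_nat_mul]; ring_nf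
      _ ≤ Real.exp (-(11 / 10)) := Real.exp_le_exp.2 (by linarith)
      _ ≤ 2 / 5 := by
          have := Real.quadratic_le_exp_of_nonneg (x := 11 / 10) (by norm_num)
          rw [Real.exp_neg, inv_le_comm₀ (Real.exp_pos _) (by norm_num)]
          linarith
  rcases lt_or_ge ζ (3 / 5) with hζ' | hζ'
  · have h2 : 2 ≤ k := by
      by_contra h
      have : (k : ℝ) ≤ 1 := by exact_mod_cast (by omega : k ≤ 1)
      nlinarith
    calc (1 - ζ) ^ k ≤ (1 - ζ) ^ 2 := pow_le_pow_of_le_one (by linarith) (by linarith) h2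
      _ ≤ 2 / 5 := by nlinarith
  · have h1 : 1 ≤ k := by
      by_contra h
      have : (k : ℝ) = 0 := by exact_mod_cast (by omega : k = 0)
      nlinarith
    calc (1 - ζ) ^ k ≤ (1 - ζ) ^ 1 := pow_le_pow_of_le_one (by linarith) (by linarith) h1
      _ ≤ 2 / 5 := by linarith

section AvoidingBall

variable {V : Type*}

def avoidingBall (H : SimpleGraph V) (R : Set V) (a : ↥Rᶜ) (n : ℕ) : Set V :=
  Subtype.val '' {w | (H.induce Rᶜ).edist a w ≤ n}

variable {H : SimpleGraph V} {R : Set V}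

lemma self_mem_avoidingBall (a : ↥Rᶜ) : (a : V) ∈ avoidingBall H R a 0 :=
  ⟨a, by simp, rfl⟩

lemma avoidingBall_mono (a : ↥Rᶜ) : Monotone (avoidingBall H R a) :=
  fun _ _ hmn => Set.image_mono fun _ hw => le_trans (α := ℕ∞) hw (by exact_mod_cast hmn)

lemma avoidingBall_subset_compl (a : ↥Rᶜ) (n : ℕ) : avoidingBall H R a n ⊆ Rᶜ := by
  rintro _ ⟨w, -, rfl⟩
  exact w.2

lemma mem_avoidingBall_succ_or_mem_of_adj {a : ↥Rᶜ} {n : ℕ} {u v : V}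
    (hu : u ∈ avoidingBall H R a n) (huv : H.Adj u v) :
    v ∈ avoidingBall H R a (n + 1) ∨ v ∈ R := by
  by_cases hv : v ∈ R
  · exact .inr hv
  obtain ⟨u, hu, rfl⟩ := hu
  refine .inl ⟨⟨v, hv⟩, ?_, rfl⟩
  have hadj : (H.induce Rᶜ).edist u ⟨v, hv⟩ = 1 := edist_eq_one_iff_adj.2 huv
  calc (H.induce Rᶜ).edist a ⟨v, hv⟩ ≤ (H.induce Rᶜ).edist a u + 1 :=
        hadj ▸ (H.induce Rᶜ).edist_triangle
    _ ≤ n + 1 := by gcongr; exact hu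
    _ = (n + 1 : ℕ) := by push_cast; rfl

lemma exists_isPath_of_mem_avoidingBall {a b : ↥Rᶜ} {m n : ℕ} {z : V}
    (hza : z ∈ avoidingBall H R a m) (hzb : z ∈ avoidingBall H R b n) :
    ∃ p : (H.induce Rᶜ).Walk a b, p.IsPath ∧ p.length ≤ m + n := by
  obtain ⟨w, hwa, rfl⟩ := hza
  obtain ⟨w', hwb, hww'⟩ := hzb
  rw [Subtype.ext hww'] at hwb
  have hab : (H.induce Rᶜ).edist a b ≤ (m + n : ℕ) := by
    calc (H.induce Rᶜ).edist a b ≤ (H.induce Rᶜ).edist a w + (H.induce Rᶜ).edist w b :=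
          (H.induce Rᶜ).edist_triangle
      _ ≤ m + n := add_le_add hwa (SimpleGraph.edist_comm ▸ hwb)
      _ = (m + n : ℕ) := by push_cast; rfl
  have hreach := reachable_of_edist_ne_top (ne_top_of_le_ne_top (by simp) hab)
  obtain ⟨p, hp, hlen⟩ := hreach.exists_path_of_dist
  refine ⟨p, hp, ?_⟩
  rw [hlen]
  exact_mod_cast hreach.coe_dist_eq_edist ▸ hab

end AvoidingBall

lemma not_disjoint_avoidingBall {V : Type*} [Finite V] {H : SimpleGraph V} {R : Set V} {ζ : ℝ}
    (hζ0 : 0 < ζ) (hζ1 : ζ < 1) (hG : ¬ HasSparseCut H Set.univ ζ)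
    (hR : (R.ncard : ℝ) ≤ ζ / 6 * Nat.card V) (a b : ↥Rᶜ) :
    ¬ Disjoint (avoidingBall H R a ⌊3 / (2 * ζ)⌋₊) (avoidingBall H R b ⌊3 / (2 * ζ)⌋₊) := by
  intro hdisj
  set k := ⌊3 / (2 * ζ)⌋₊
  set Q := (1 - ζ) ^ k
  have hball (c : ↥Rᶜ) : ζ * (Nat.card V - (avoidingBall H R c k).ncard) - R.ncard ≤
      Q * (ζ * (Nat.card V - 1) - R.ncard) :=
    sub_le_pow_mul_of_not_hasSparseCut hζ0.le hζ1.le hG ⟨c, self_mem_avoidingBall c⟩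
      (avoidingBall_mono c) (fun _ _ hu _ huv => mem_avoidingBall_succ_or_mem_of_adj hu huv) k
  have hsum : ((avoidingBall H R a k).ncard : ℝ) + (avoidingBall H R b k).ncard ≤
      Nat.card V - R.ncard := by
    have hle : (avoidingBall H R a k ∪ avoidingBall H R b k).ncard ≤ Rᶜ.ncard :=
      Set.ncard_le_ncard
        (Set.union_subset (avoidingBall_subset_compl a k) (avoidingBall_subset_compl b k))
    rw [Set.ncard_union_eq hdisj] at hle
    rw [← Set.ncard_add_ncard_compl R]
    push_cast
    linarith [(by exact_mod_cast hle : ((avoidingBall H R a k).ncard : ℝ) +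
      (avoidingBall H R b k).ncard ≤ Rᶜ.ncard)]
  have hQ : Q ≤ 2 / 5 := one_sub_pow_floor_le hζ0 hζ1.le
  have hQ0 : 0 < Q := pow_pos (by linarith) k
  have hr0 : (0 : ℝ) ≤ R.ncard := Nat.cast_nonneg _
  have ha := hball a
  have hb := hball b
  -- `(1 - 2Q) ζN ≥ 6 (1 - 2Q) |R| ≥ (2 - ζ - 2Q) |R|` because `Q ≤ 2/5`
  nlinarith [mul_le_mul_of_nonneg_left hsum hζ0.le, mul_pos hQ0 hζ0,
    mul_nonneg (by linarith : 0 ≤ ζ / 6 * Nat.card V - R.ncard)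
      (by linarith : (0 : ℝ) ≤ 1 - 2 * Q),
    mul_nonneg hr0 (by linarith : 0 ≤ 4 - 10 * Q + ζ)]

/-- **Short connections avoiding a small set** (Proposition 3.2): if `H` has no
`ζ`-sparse cut then any two vertices outside a small set `R` are joined by a path of
length at most `3/ζ` in `H − R`. -/
theorem short_connection :
    ∀ ζ : ℝ, 0 < ζ → ζ < 1 →
    ∀ (V : Type) [Fintype V] (H : SimpleGraph V),
      ¬ HasSparseCut H Set.univ ζ →
    ∀ R : Set V, (R.ncard : ℝ) ≤ ζ / 6 * Fintype.card V →
    ∀ x y : V, x ∉ R → y ∉ R → x ≠ y →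
    ∃ (hx : x ∈ Rᶜ) (hy : y ∈ Rᶜ) (p : (H.induce Rᶜ).Walk ⟨x, hx⟩ ⟨y, hy⟩),
      p.IsPath ∧ (p.length : ℝ) ≤ 3 / ζ := by
  intro ζ hζ0 hζ1 V _ H hG R hR x y hx hy _
  rw [← Nat.card_eq_fintype_card] at hR
  obtain ⟨z, hzx, hzy⟩ :=
    Set.not_disjoint_iff.1 (not_disjoint_avoidingBall hζ0 hζ1 hG hR ⟨x, hx⟩ ⟨y, hy⟩)
  obtain ⟨p, hp, hlen⟩ := exists_isPath_of_mem_avoidingBall hzx hzy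
  refine ⟨hx, hy, p, hp, ?_⟩
  calc (p.length : ℝ) ≤ 2 * ⌊3 / (2 * ζ)⌋₊ := by exact_mod_cast hlen.trans (by omega)
    _ ≤ 2 * (3 / (2 * ζ)) := by gcongr; exact Nat.floor_le (by positivity)
    _ = 3 / ζ := by field_simp
end

section
/- Let constants τ, ζ, δ satisfy 0 < τ ≪ ζ ≪ δ (quantified from largest to smallest: for every δ there is a threshold for ζ, and for every ζ a threshold for τ). Let n be a positive integer, let H be a graph on at most n vertices, let H' be a spanning subgraph of H obtained by removing at most τ·n² edges, and let W ⊆ V(H) be a set of at most τ·n vertices. If H has no ζ-sparse cut and the minimum degree of H' is at least δ·n, then the graph H' − W (the subgraph of H' induced on V(H) \ W) has no 0.99ζ-sparse cut and its minimum degree is at least 0.99δ·n. -/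
/-! In `H' − W` every vertex loses at most `|W|` neighbours. For a `0.99ζ`-sparse cut `{X, Y}` of
`H' − W`, counting the edges leaving `X` with the minimum degree gives `δn - |W| - |X| ≤ 0.99ζ|Y|`,
so both sides have at least `δn/2` vertices. Then `{X ∪ W, Y}` is a cut of `H` with at most
`0.99ζ|X||Y| + |W||Y| + τn²` edges, which is below `ζ|X||Y|` once `τ ≪ ζδ²`. -/

open SimpleGraph

section Count

variable {V : Type*} (G : SimpleGraph V) (X Y : Set V)

lemma ebtw_comm : ebtw G X Y = ebtw G Y X := by
  unfold ebtw
  congr 1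
  ext e
  constructor <;> rintro ⟨he, x, hx, y, hy, rfl⟩ <;> exact ⟨he, y, hy, x, hx, Sym2.eq_swap⟩

variable [Finite V]

lemma ebtw_le_ncard_mul_ncard_s10 : ebtw G X Y ≤ X.ncard * Y.ncard := by
  rw [← Set.ncard_prod]
  refine (Set.ncard_le_ncard ?_).trans (Set.ncard_image_le (f := fun p : V × V => s(p.1, p.2)))
  rintro e ⟨-, x, hx, y, hy, rfl⟩
  exact ⟨(x, y), ⟨hx, hy⟩, rfl⟩

lemma ebtw_union_left_le (W : Set V) : ebtw G (X ∪ W) Y ≤ ebtw G X Y + ebtw G W Y := by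
  refine (Set.ncard_le_ncard ?_).trans (Set.ncard_union_le _ _)
  rintro e ⟨he, x, hx | hx, y, hy, rfl⟩
  · exact Or.inl ⟨he, x, hx, y, hy, rfl⟩
  · exact Or.inr ⟨he, x, hx, y, hy, rfl⟩

lemma ebtw_le_ebtw_add_ncard_edgeSet_diff (G' : SimpleGraph V) :
    ebtw G X Y ≤ ebtw G' X Y + (G.edgeSet \ G'.edgeSet).ncard := by
  refine (Set.ncard_le_ncard ?_).trans (Set.ncard_union_le _ _)
  rintro e ⟨he, hxy⟩
  by_cases he' : e ∈ G'.edgeSet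
  · exact Or.inl ⟨he', hxy⟩
  · exact Or.inr ⟨he, he'⟩

lemma ncard_sep_prod_adj_eq_sum :
    {p | p ∈ X ×ˢ Y ∧ G.Adj p.1 p.2}.ncard =
      ∑ x ∈ X.toFinite.toFinset, {y | y ∈ Y ∧ G.Adj x y}.ncard := by
  classical
  have := Fintype.ofFinite V
  simp only [Set.ncard_eq_toFinset_card', Set.toFinset_ofPred, Set.mem_prod, Finset.card_filter,
    Fintype.sum_prod_type, and_assoc, ite_and, Finset.sum_ite_irrel, Finset.sum_const_zero]
  rw [← Finset.sum_filter]
  congr 1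
  ext
  simp

lemma ebtw_eq_sum_ncard (hd : Disjoint X Y) :
    ebtw G X Y = ∑ x ∈ X.toFinite.toFinset, {y | y ∈ Y ∧ G.Adj x y}.ncard := by
  have himage : {e : Sym2 V | e ∈ G.edgeSet ∧ ∃ x ∈ X, ∃ y ∈ Y, e = s(x, y)} =
      (fun p : V × V => s(p.1, p.2)) '' {p | p ∈ X ×ˢ Y ∧ G.Adj p.1 p.2} := by
    ext e
    constructor
    · rintro ⟨he, x, hx, y, hy, rfl⟩
      exact ⟨(x, y), ⟨⟨hx, hy⟩, he⟩, rfl⟩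
    · rintro ⟨⟨x, y⟩, ⟨⟨hx, hy⟩, hxy⟩, rfl⟩
      exact ⟨hxy, x, hx, y, hy, rfl⟩
  have hinj : Set.InjOn (fun p : V × V => s(p.1, p.2)) {p | p ∈ X ×ˢ Y ∧ G.Adj p.1 p.2} := by
    rintro ⟨x, y⟩ ⟨⟨hx, hy⟩, -⟩ ⟨x', y'⟩ ⟨⟨hx', hy'⟩, -⟩ h
    rcases Sym2.eq_iff.mp h with ⟨rfl, rfl⟩ | ⟨rfl, rfl⟩
    · rfl
    · exact (Set.disjoint_left.mp hd hx hy').elim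
  rw [ebtw, himage, hinj.ncard_image, ncard_sep_prod_adj_eq_sum]

lemma ncard_mul_le_ebtw (hd : Disjoint X Y) {m : ℝ}
    (hm : ∀ x ∈ X, m ≤ {y | y ∈ Y ∧ G.Adj x y}.ncard) :
    X.ncard * m ≤ ebtw G X Y := by
  rw [ebtw_eq_sum_ncard G X Y hd, Set.ncard_eq_toFinset_card X, Nat.cast_sum, ← nsmul_eq_mul]
  exact Finset.card_nsmul_le_sum _ _ _ fun x hx => hm x (by simpa using hx)

lemma ncard_neighborSet_le_ncard_inter_add_ncard_compl (v : V) (B : Set V) :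
    {u | G.Adj v u}.ncard ≤ {u | u ∈ B ∧ G.Adj v u}.ncard + Bᶜ.ncard :=
  (Set.ncard_le_ncard fun u hu => (em (u ∈ B)).imp (fun h => ⟨h, hu⟩) id).trans
    (Set.ncard_union_le _ _)

end Count

section SparseCut

variable {V : Type*} [Finite V] {G H : SimpleGraph V} {X Y W : Set V}

lemma sub_le_ncard_of_sparse_cut {D α : ℝ} (hdeg : ∀ v, D ≤ ({u | G.Adj v u}.ncard : ℝ))
    (hXY : X ∪ Y = Wᶜ) (hd : Disjoint X Y) (hX : X.Nonempty)
    (hcut : (ebtw G X Y : ℝ) ≤ α * X.ncard * Y.ncard) :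
    D - W.ncard - α * Y.ncard ≤ X.ncard := by
  have hYc : Yᶜ ⊆ X ∪ W := fun u hu => by
    by_cases hW : u ∈ W
    · exact Or.inr hW
    · exact Or.inl (((hXY.symm ▸ hW : u ∈ X ∪ Y)).resolve_right hu)
  have hnbr : ∀ x ∈ X, D - X.ncard - W.ncard ≤ ({y | y ∈ Y ∧ G.Adj x y}.ncard : ℝ) := by
    intro x _
    have h1 : ({u | G.Adj x u}.ncard : ℝ) ≤ {y | y ∈ Y ∧ G.Adj x y}.ncard + Yᶜ.ncard := by
      exact_mod_cast ncard_neighborSet_le_ncard_inter_add_ncard_compl G x Y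
    have h2 : (Yᶜ.ncard : ℝ) ≤ X.ncard + W.ncard := by
      exact_mod_cast (Set.ncard_le_ncard hYc).trans (Set.ncard_union_le X W)
    linarith [hdeg x]
  have hX0 : (0 : ℝ) < X.ncard := by exact_mod_cast (Set.ncard_pos).2 hX
  have h := (ncard_mul_le_ebtw G X Y hd hnbr).trans hcut
  have : D - X.ncard - W.ncard ≤ α * Y.ncard :=
    le_of_mul_le_mul_left (by linarith : (X.ncard : ℝ) * _ ≤ X.ncard * (α * Y.ncard)) hX0
  linarith

lemma mul_ncard_lt_of_not_hasSparseCut {ζ α : ℝ} (hH : ¬ HasSparseCut H Set.univ ζ) (hζ : 0 ≤ ζ)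
    (hXY : X ∪ Y = Wᶜ) (hd : Disjoint X Y) (hX : X.Nonempty) (hY : Y.Nonempty)
    (hcut : (ebtw G X Y : ℝ) ≤ α * X.ncard * Y.ncard) :
    ζ * X.ncard * Y.ncard <
      α * X.ncard * Y.ncard + W.ncard * Y.ncard + (H.edgeSet \ G.edgeSet).ncard := by
  have hWY : Disjoint W Y := disjoint_compl_right.mono_right (hXY ▸ Set.subset_union_right)
  have hlift : ζ * (X ∪ W).ncard * Y.ncard < ebtw H (X ∪ W) Y := lt_of_not_ge fun h =>
    hH ⟨X ∪ W, Y, by rw [Set.union_right_comm, hXY, Set.compl_union_self],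
      Set.disjoint_union_left.2 ⟨hd, hWY⟩, hX.inl, hY, h⟩
  have hXW : (X.ncard : ℝ) ≤ (X ∪ W).ncard := by
    exact_mod_cast Set.ncard_le_ncard Set.subset_union_left
  have hmono : ζ * X.ncard * Y.ncard ≤ ζ * (X ∪ W).ncard * Y.ncard := by gcongr
  have hedges : (ebtw H (X ∪ W) Y : ℝ) ≤
      ebtw G X Y + W.ncard * Y.ncard + (H.edgeSet \ G.edgeSet).ncard := by
    exact_mod_cast (ebtw_le_ebtw_add_ncard_edgeSet_diff H (X ∪ W) Y G).trans <|
      Nat.add_le_add_right ((ebtw_union_left_le G X Y W).trans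
        (Nat.add_le_add_left (ebtw_le_ncard_mul_ncard_s10 G W Y) _)) _
  linarith

end SparseCut

/-- **Robustness under removal of few vertices and edges** (Observation 3.3(i)):
if `H` has no `ζ`-sparse cut, `H'` is obtained from `H` by deleting at most `τ n²` edges
and has minimum degree at least `δ n`, and `W` is a set of at most `τ n` vertices, then
`H' − W` has no `0.99 ζ`-sparse cut and has minimum degree at least `0.99 δ n`. -/
theorem remove_small_sparse_cut_min_degree :
    ∀ δ : ℝ, 0 < δ →
    ∃ ζ₀ : ℝ, 0 < ζ₀ ∧ ∀ ζ : ℝ, 0 < ζ → ζ ≤ ζ₀ →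
    ∃ τ₀ : ℝ, 0 < τ₀ ∧ ∀ τ : ℝ, 0 < τ → τ ≤ τ₀ →
    ∀ n : ℕ, 0 < n →
    ∀ (V : Type) [Fintype V] (H H' : SimpleGraph V),
      Fintype.card V ≤ n →
      H' ≤ H → ((H.edgeSet \ H'.edgeSet).ncard : ℝ) ≤ τ * n ^ 2 →
    ∀ W : Set V, (W.ncard : ℝ) ≤ τ * n →
      ¬ HasSparseCut H Set.univ ζ →
      (∀ v : V, δ * n ≤ ({u | H'.Adj v u}.ncard : ℝ)) →
      ¬ HasSparseCut H' Wᶜ (0.99 * ζ) ∧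
        ∀ v ∈ Wᶜ, 0.99 * δ * n ≤ ({u | u ∈ Wᶜ ∧ H'.Adj v u}.ncard : ℝ) := by
  intro δ hδ
  refine ⟨δ / 4, by positivity, fun ζ hζ hζδ => ⟨min (δ / 100) (ζ * δ ^ 2 / 800), by positivity, ?_⟩⟩
  intro τ hτ hτ₀ n _ V _ H H' hV _ hE W hW hH hdeg
  have hWδ : (W.ncard : ℝ) ≤ δ / 100 * n := hW.trans (by gcongr; exact hτ₀.trans (min_le_left _ _))
  have hτζ : τ * n ^ 2 ≤ ζ * δ ^ 2 / 800 * n ^ 2 := by gcongr; exact hτ₀.trans (min_le_right _ _)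
  have hcard (A : Set V) : A.ncard ≤ n :=
    (Set.ncard_le_card A).trans (Nat.card_eq_fintype_card (α := V) ▸ hV)
  refine ⟨?_, fun v _ => ?_⟩
  · rintro ⟨X, Y, hXY, hd, hX, hY, hcut⟩
    have hcut' : (ebtw H' Y X : ℝ) ≤ 0.99 * ζ * Y.ncard * X.ncard := by
      rwa [ebtw_comm, mul_right_comm]
    have hXlarge := sub_le_ncard_of_sparse_cut hdeg hXY hd hX hcut
    have hYlarge := sub_le_ncard_of_sparse_cut hdeg (Set.union_comm X Y ▸ hXY) hd.symm hY hcut'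
    have hζX : ζ * X.ncard ≤ δ / 4 * n := by gcongr; exact hcard X
    have hζY : ζ * Y.ncard ≤ δ / 4 * n := by gcongr; exact hcard Y
    have hXYlarge : δ * n / 2 * (δ * n / 2) ≤ X.ncard * Y.ncard := by
      gcongr <;> linarith
    have hWY : (W.ncard : ℝ) * Y.ncard ≤ τ * n * n := by gcongr; exact hcard Y
    have hlift := mul_ncard_lt_of_not_hasSparseCut hH hζ.le hXY hd hX hY hcut
    linarith [mul_le_mul_of_nonneg_left hXYlarge hζ.le]
  · have hloss : ({u | H'.Adj v u}.ncard : ℝ) ≤ {u | u ∈ Wᶜ ∧ H'.Adj v u}.ncard + W.ncard := by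
      exact_mod_cast compl_compl W ▸ ncard_neighborSet_le_ncard_inter_add_ncard_compl H' v Wᶜ
    linarith [hdeg v]
end

section
/- Let H be a bipartite graph with vertex classes X and Y whose vertex set is partitioned into sets U₁, …, U_k. Suppose M is a matching in H that balances U_i for every i ∈ [k], i.e., |(U_i ∩ X) \ V(M)| = |(U_i ∩ Y) \ V(M)| for every i. Then M contains a sub-matching M' ⊆ M with at most (disb(U₁) + ⋯ + disb(U_k))·k/2 edges that balances U_i for every i ∈ [k], where disb(U) = ||U ∩ X| − |U ∩ Y||. -/
/-!
Orient every edge of `M` from (the part containing) its `X`-end to its `Y`-end. This gives a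
multidigraph on the index set `[k]`, and a sub-matching `M'` balances every `U i` exactly when the
out-degree minus the in-degree of every `i` in the digraph of `M'` equals
`d i = |U i ∩ X| - |U i ∩ Y|`, as it does for `M`. Deleting a directed cycle does not change these
net degrees, so a smallest arc set with net degrees `d` is acyclic. In an acyclic digraph the
number `h i ≤ k` of vertices with a path to `i` strictly increases along every arc, whence
`|S| ≤ ∑ (h (head) - h (tail)) = -∑ h i * d i ≤ k/2 * ∑ |d i|`, using `∑ d i = 0`.
-/

open SimpleGraph

def IsBipartitionOf {V : Type*} (G : SimpleGraph V) (X Y : Set V) : Prop :=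
  X ∪ Y = Set.univ ∧ Disjoint X Y ∧
    ∀ u v : V, G.Adj u v → (u ∈ X ∧ v ∈ Y) ∨ (u ∈ Y ∧ v ∈ X)

open Finset Relation Function

lemma Function.periodicPts_nonempty {γ : Type*} [Finite γ] [Nonempty γ] (σ : γ → γ) :
    (periodicPts σ).Nonempty := by
  obtain x : γ := Classical.arbitrary γ
  obtain ⟨m, n, heq, hne⟩ : ∃ m n, σ^[m] x = σ^[n] x ∧ m ≠ n := by
    simpa [Injective] using not_injective_infinite_finite (σ^[·] x)
  wlog hmn : m < n generalizing m n
  · exact this n m heq.symm hne.symm (by omega)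
  refine ⟨σ^[m] x, mk_mem_periodicPts (Nat.sub_pos_of_lt hmn) ?_⟩
  rw [IsPeriodicPt, IsFixedPt, ← iterate_add_apply, Nat.sub_add_cancel hmn.le, heq]

section Arcs

variable {α β : Type*} [DecidableEq β] (f g : α → β)

def netOut (S : Finset α) (i : β) : ℤ := #{e ∈ S | f e = i} - #{e ∈ S | g e = i}

def arcRel (S : Finset α) (a b : β) : Prop := ∃ e ∈ S, f e = a ∧ g e = b

lemma netOut_sdiff [DecidableEq α] {S C : Finset α} (hCS : C ⊆ S) :
    netOut f g (S \ C) = netOut f g S - netOut f g C := by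
  have key (p : α → Prop) [DecidablePred p] :
      (#{e ∈ S \ C | p e} : ℤ) + #{e ∈ C | p e} = #{e ∈ S | p e} := by
    rw [← Nat.cast_add, ← card_union_of_disjoint (disjoint_filter_filter sdiff_disjoint),
      ← filter_union, sdiff_union_of_subset hCS]
  funext i
  have := key (f · = i)
  have := key (g · = i)
  simp only [netOut, Pi.sub_apply]
  linarith

lemma sum_mul_netOut [Fintype β] (S : Finset α) (φ : β → ℤ) :
    ∑ i, φ i * netOut f g S i = ∑ e ∈ S, (φ (f e) - φ (g e)) := by
  have fiber (c : α → β) : ∑ i, φ i * #{e ∈ S | c e = i} = ∑ e ∈ S, φ (c e) := by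
    rw [← sum_fiberwise' S c]
    simp [sum_const, mul_comm]
  simp only [netOut, mul_sub, sum_sub_distrib, fiber]

lemma netOut_image_eq_zero [DecidableEq α] {γ : Type*} {P : Finset γ} {e : γ → α} {σ : γ → γ}
    (hσ : Set.BijOn σ P P) (he : Set.InjOn e P) (hfg : ∀ j ∈ P, g (e j) = f (e (σ j))) :
    netOut f g (P.image e) = 0 := by
  funext i
  have hsub (p : γ → Prop) [DecidablePred p] : (↑{j ∈ P | p j} : Set γ) ⊆ P :=
    coe_subset.2 (filter_subset _ _)
  rw [netOut, filter_image, filter_image, card_image_of_injOn (he.mono (hsub _)),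
    card_image_of_injOn (he.mono (hsub _)), Pi.zero_apply, sub_eq_zero, Nat.cast_inj]
  refine (card_nbij σ (fun j hj => ?_) (hσ.injOn.mono (hsub _)) (fun j hj => ?_)).symm
  · rw [mem_coe, mem_filter] at hj ⊢
    exact ⟨hσ.mapsTo hj.1, hfg j hj.1 ▸ hj.2⟩
  · rw [coe_filter] at hj
    obtain ⟨j', hj', rfl⟩ := hσ.surjOn hj.1
    exact ⟨j', by simpa only [coe_filter] using ⟨hj', (hfg j' hj').trans hj.2⟩, rfl⟩

/- Every vertex on a closed walk has an out-arc to another such vertex; the chosen arcs define a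
self-map whose periodic points split into cycles, and the arcs leaving them have zero net degree. -/
lemma exists_netOut_eq_zero_of_transGen [DecidableEq α] [Finite β] {E : Finset α} {i : β}
    (hi : TransGen (arcRel f g E) i i) : ∃ C ⊆ E, C.Nonempty ∧ netOut f g C = 0 := by
  let Z := {j // TransGen (arcRel f g E) j j}
  have hstep (j : Z) : ∃ e ∈ E, f e = j ∧ TransGen (arcRel f g E) (g e) (g e) := by
    obtain ⟨j, hj⟩ := j
    obtain ⟨_, ⟨e, he, rfl, rfl⟩, hback⟩ := TransGen.head'_iff.mp hj
    exact ⟨e, he, rfl, TransGen.tail' hback ⟨e, he, rfl, rfl⟩⟩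
  choose e he hfe hge using hstep
  let σ : Z → Z := fun j => ⟨g (e j), hge j⟩
  have : Nonempty Z := ⟨⟨i, hi⟩⟩
  let P := (Set.toFinite (periodicPts σ)).toFinset
  have hP : (P : Set Z) = periodicPts σ := Set.Finite.coe_toFinset _
  refine ⟨P.image e, image_subset_iff.2 fun j _ => he j, ?_,
    netOut_image_eq_zero f g (σ := σ) ?_ ?_ ?_⟩
  · exact (Set.Finite.toFinset_nonempty _).2 (periodicPts_nonempty σ) |>.image e
  · exact hP ▸ bijOn_periodicPts σ
  · exact fun a _ b _ hab => Subtype.ext (by rw [← hfe a, ← hfe b, hab])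
  · exact fun j _ => (hfe (σ j)).symm

lemma two_mul_card_le_of_acyclic [Fintype β] {E : Finset α}
    (hE : ∀ i, ¬TransGen (arcRel f g E) i i) :
    2 * (#E : ℤ) ≤ (∑ i, |netOut f g E i|) * Fintype.card β := by
  classical
  let height (i : β) : ℤ := #{j | TransGen (arcRel f g E) j i}
  have height_lt (e) (he : e ∈ E) : height (f e) < height (g e) := by
    have harc : arcRel f g E (f e) (g e) := ⟨e, he, rfl, rfl⟩
    refine Nat.cast_lt.2 (card_lt_card ((ssubset_iff_of_subset fun j hj => ?_).2 ⟨f e, ?_, ?_⟩))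
    · simp only [mem_filter, mem_univ, true_and] at hj ⊢
      exact hj.tail harc
    · simpa using TransGen.single harc
    · simpa using hE (f e)
  have height_le (i) : 0 ≤ height i ∧ height i ≤ Fintype.card β :=
    ⟨Nat.cast_nonneg _, Nat.cast_le.2 (card_le_univ _)⟩
  have hsum : ∑ i, netOut f g E i = 0 := by simpa using sum_mul_netOut f g E fun _ => 1
  set d := netOut f g E
  have hpoint (i) : 2 * (-height i * d i) ≤ Fintype.card β * (|d i| - d i) := by
    obtain ⟨h0, hK⟩ := height_le i
    rcases le_or_gt 0 (d i) with hd | hd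
    · rw [abs_of_nonneg hd]; nlinarith
    · rw [abs_of_neg hd]; nlinarith
  calc 2 * (#E : ℤ) = 2 * ∑ _e ∈ E, 1 := by simp
    _ ≤ 2 * ∑ e ∈ E, (-height (f e) - -height (g e)) := by
        gcongr with e he
        linarith [height_lt e he]
    _ = ∑ i, 2 * (-height i * d i) := by rw [← mul_sum, sum_mul_netOut]
    _ ≤ ∑ i, Fintype.card β * (|d i| - d i) := sum_le_sum fun i _ => hpoint i
    _ = (∑ i, |d i|) * Fintype.card β := by
        rw [← mul_sum, sum_sub_distrib, hsum, sub_zero, mul_comm]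

theorem exists_subset_netOut_eq_two_mul_card_le [DecidableEq α] [Fintype β] (E : Finset α) :
    ∃ S ⊆ E, netOut f g S = netOut f g E ∧
      2 * (#S : ℤ) ≤ (∑ i, |netOut f g E i|) * Fintype.card β := by
  obtain ⟨S, hS, hmin⟩ := exists_min_image {S ∈ E.powerset | netOut f g S = netOut f g E} card
    ⟨E, by simp⟩
  rw [mem_filter, mem_powerset] at hS
  refine ⟨S, hS.1, hS.2, hS.2 ▸ two_mul_card_le_of_acyclic f g fun i hi => ?_⟩
  obtain ⟨C, hCS, hC, hC0⟩ := exists_netOut_eq_zero_of_transGen f g hi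
  have hle := hmin (S \ C) (by
    rw [mem_filter, mem_powerset, netOut_sdiff f g hCS, hC0, sub_zero]
    exact ⟨sdiff_subset.trans hS.1, hS.2⟩)
  exact (card_lt_card (sdiff_ssubset hCS hC)).not_ge hle

end Arcs

section Bipartite

variable {V : Type*}

open Classical in
/-- Junk unless exactly one endpoint of `e` lies in `A`. -/
noncomputable def endpointIn (A : Set V) (e : Sym2 V) : V :=
  if e.out.1 ∈ A then e.out.1 else e.out.2

lemma endpointIn_mk {A : Set V} {u v : V} (hu : u ∈ A) (hv : v ∉ A) :
    endpointIn A s(u, v) = u := by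
  have hout : s((s(u, v)).out.1, (s(u, v)).out.2) = s(u, v) := Quot.out_eq _
  rcases Sym2.eq_iff.mp hout with ⟨h1, h2⟩ | ⟨h1, h2⟩ <;>
    simp [endpointIn, h1, h2, hu, hv]

lemma exists_eq_preimage_singleton {ι : Type*} {U : ι → Set V}
    (hdisj : Pairwise fun i j => Disjoint (U i) (U j)) (hcover : ⋃ i, U i = Set.univ) :
    ∃ c : V → ι, U = fun i => c ⁻¹' {i} := by
  choose c hc using fun v => Set.mem_iUnion.mp (hcover ▸ Set.mem_univ v)
  refine ⟨c, funext fun i => Set.ext fun v => ⟨fun hv => ?_, fun hv => hv ▸ hc v⟩⟩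
  by_contra hne
  exact Set.disjoint_left.mp (hdisj hne) (hc v) hv

namespace SimpleGraph.Subgraph

variable {G : SimpleGraph V} {M : G.Subgraph}

lemma IsMatching.eq_of_mem_edgeSet (hM : M.IsMatching) {e e' : Sym2 V} {v : V}
    (he : e ∈ M.edgeSet) (he' : e' ∈ M.edgeSet) (hv : v ∈ e) (hv' : v ∈ e') : e = e' := by
  obtain ⟨w, rfl⟩ := Sym2.mem_iff_exists.mp hv
  obtain ⟨w', rfl⟩ := Sym2.mem_iff_exists.mp hv'
  rw [hM.eq_of_adj_left (M.mem_edgeSet.mp he) (M.mem_edgeSet.mp he')]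

lemma IsMatching.exists_le_edgeSet_eq (hM : M.IsMatching) {S : Set (Sym2 V)}
    (hS : S ⊆ M.edgeSet) : ∃ M' ≤ M, M'.IsMatching ∧ M'.edgeSet = S := by
  let M' : G.Subgraph :=
    { verts := {v | ∃ e ∈ S, v ∈ e}
      Adj u v := M.Adj u v ∧ s(u, v) ∈ S
      adj_sub h := M.adj_sub h.1
      edge_vert h := ⟨_, h.2, Sym2.mem_mk_left _ _⟩
      symm := ⟨fun _ _ h => ⟨h.1.symm, Sym2.eq_swap ▸ h.2⟩⟩ }
  refine ⟨M', ⟨fun v ⟨e, he, hv⟩ => ?_, fun _ _ h => h.1⟩, fun v ⟨e, he, hv⟩ => ?_, ?_⟩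
  · exact M.mem_verts_of_mem_edge (hS he) hv
  · obtain ⟨w, rfl⟩ := Sym2.mem_iff_exists.mp hv
    exact ⟨w, ⟨hS he, he⟩, fun w' h => hM.eq_of_adj_left h.1 (hS he)⟩
  · ext e
    induction e with
    | _ u v => exact ⟨fun h => h.2, fun h => ⟨hS h, h⟩⟩

end SimpleGraph.Subgraph

variable {H : SimpleGraph V} {X Y : Set V}

lemma IsBipartitionOf.symm (hXY : IsBipartitionOf H X Y) : IsBipartitionOf H Y X :=
  ⟨Set.union_comm X Y ▸ hXY.1, hXY.2.1.symm, fun u v huv => (hXY.2.2 u v huv).symm⟩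

lemma IsBipartitionOf.endpointIn_mk_of_adj (hXY : IsBipartitionOf H X Y) {u v : V}
    (huv : H.Adj u v) (hu : u ∈ X) : endpointIn X s(u, v) = u := by
  refine endpointIn_mk hu fun hv => ?_
  rcases hXY.2.2 u v huv with ⟨-, hv'⟩ | ⟨hu', -⟩
  · exact Set.disjoint_left.mp hXY.2.1 hv hv'
  · exact Set.disjoint_left.mp hXY.2.1 hu hu'

lemma IsBipartitionOf.endpointIn_mem (hXY : IsBipartitionOf H X Y) {N : H.Subgraph}
    {e : Sym2 V} (he : e ∈ N.edgeSet) : endpointIn X e ∈ e ∧ endpointIn X e ∈ X := by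
  induction e with
  | _ u v =>
    have huv := N.adj_sub he
    rcases hXY.2.2 u v huv with ⟨hu, -⟩ | ⟨-, hv⟩
    · rw [hXY.endpointIn_mk_of_adj huv hu]
      exact ⟨Sym2.mem_mk_left u v, hu⟩
    · rw [Sym2.eq_swap, hXY.endpointIn_mk_of_adj huv.symm hv]
      exact ⟨Sym2.mem_mk_left v u, hv⟩

variable {N : H.Subgraph}

lemma IsBipartitionOf.injOn_endpointIn (hXY : IsBipartitionOf H X Y) (hN : N.IsMatching) :
    Set.InjOn (endpointIn X) N.edgeSet := fun _ he _ he' h =>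
  hN.eq_of_mem_edgeSet he he' (hXY.endpointIn_mem he).1 (h ▸ (hXY.endpointIn_mem he').1)

lemma IsBipartitionOf.image_endpointIn (hXY : IsBipartitionOf H X Y) (hN : N.IsMatching) :
    endpointIn X '' N.edgeSet = X ∩ N.verts := by
  refine Set.Subset.antisymm ?_ fun v ⟨hvX, hv⟩ => ?_
  · rintro _ ⟨e, he, rfl⟩
    exact ⟨(hXY.endpointIn_mem he).2, N.mem_verts_of_mem_edge he (hXY.endpointIn_mem he).1⟩
  · obtain ⟨w, hvw, -⟩ := hN hv
    exact ⟨s(v, w), hvw, hXY.endpointIn_mk_of_adj (N.adj_sub hvw) hvX⟩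

lemma IsBipartitionOf.ncard_inter_verts (hXY : IsBipartitionOf H X Y) (hN : N.IsMatching)
    (B : Set V) : (B ∩ X ∩ N.verts).ncard = (N.edgeSet ∩ endpointIn X ⁻¹' B).ncard := by
  rw [Set.inter_assoc, Set.inter_comm B, ← hXY.image_endpointIn hN, ← Set.image_inter_preimage,
    ((hXY.injOn_endpointIn hN).mono Set.inter_subset_left).ncard_image]

lemma IsBipartitionOf.ncard_diff_verts_eq_iff [Finite V] {β : Type*} [DecidableEq β]
    (hXY : IsBipartitionOf H X Y) (hN : N.IsMatching) {E : Finset (Sym2 V)}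
    (hE : ↑E = N.edgeSet) (c : V → β) (i : β) :
    ((c ⁻¹' {i} ∩ X) \ N.verts).ncard = ((c ⁻¹' {i} ∩ Y) \ N.verts).ncard ↔
      netOut (c ∘ endpointIn X) (c ∘ endpointIn Y) E i =
        (c ⁻¹' {i} ∩ X).ncard - (c ⁻¹' {i} ∩ Y).ncard := by
  have count {A A' : Set V} (h : IsBipartitionOf H A A') :
      (c ⁻¹' {i} ∩ A ∩ N.verts).ncard = #{e ∈ E | (c ∘ endpointIn A) e = i} := by
    rw [h.ncard_inter_verts hN, ← hE, ← Set.ncard_coe_finset]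
    congr 1
    ext e
    simp
  have hX := Set.ncard_inter_add_ncard_sdiff_eq_ncard (c ⁻¹' {i} ∩ X) N.verts
  have hY := Set.ncard_inter_add_ncard_sdiff_eq_ncard (c ⁻¹' {i} ∩ Y) N.verts
  rw [count hXY] at hX
  rw [count hXY.symm] at hY
  rw [netOut]
  omega

end Bipartite

/-- **Small balancing sub-matching** (Proposition 4.2): a matching balancing each part of a
vertex partition of a bipartite graph contains a balancing sub-matching with at most
`(disb U₁ + ⋯ + disb U_k) * k / 2` edges. -/
theorem small_balancing_submatching :
    ∀ (V : Type) [Fintype V] (H : SimpleGraph V) (X Y : Set V),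
      IsBipartitionOf H X Y →
    ∀ (k : ℕ) (U : Fin k → Set V),
      Pairwise (fun i j => Disjoint (U i) (U j)) →
      (⋃ i, U i) = Set.univ →
    ∀ M : H.Subgraph, M.IsMatching →
      (∀ i, ((U i ∩ X) \ M.verts).ncard = ((U i ∩ Y) \ M.verts).ncard) →
    ∃ M' : H.Subgraph, M' ≤ M ∧ M'.IsMatching ∧
      (M'.edgeSet.ncard : ℝ) ≤
        (∑ i : Fin k, |(((U i ∩ X).ncard : ℝ)) - ((U i ∩ Y).ncard : ℝ)|) * k / 2 ∧
      ∀ i, ((U i ∩ X) \ M'.verts).ncard = ((U i ∩ Y) \ M'.verts).ncard := by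
  intro V _ H X Y hXY k U hdisj hcover M hM hbal
  classical
  obtain ⟨c, rfl⟩ := exists_eq_preimage_singleton hdisj hcover
  obtain ⟨E, hE⟩ := (Set.toFinite M.edgeSet).exists_finset_coe
  have hnetE i := (hXY.ncard_diff_verts_eq_iff hM hE c i).1 (hbal i)
  obtain ⟨S, hSE, hnetS, hcard⟩ :=
    exists_subset_netOut_eq_two_mul_card_le (c ∘ endpointIn X) (c ∘ endpointIn Y) E
  obtain ⟨M', hM'M, hM', hM'S⟩ := hM.exists_le_edgeSet_eq (hE ▸ coe_subset.2 hSE)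
  refine ⟨M', hM'M, hM', ?_, fun i =>
    (hXY.ncard_diff_verts_eq_iff hM' hM'S.symm c i).2 (hnetS ▸ hnetE i)⟩
  simp only [hnetE, Fintype.card_fin] at hcard
  rw [hM'S, Set.ncard_coe_finset]
  have := (Int.cast_le (R := ℝ)).2 hcard
  push_cast at this
  linarith
end

section
/- Let G be a graph on n vertices whose vertex set is partitioned into clusters A₁, …, A_r such that G has at most η·n² edges with ends in different clusters, where η ≤ r·β/2. Suppose each cluster A_i is designated either 'near-bipartite', with a prescribed partition {X_i, Y_i} of A_i such that at most β·n² edges of G[A_i] have both ends in X_i or both ends in Y_i, or 'far-from-bipartite'. Let Ḡ be the lift (bipartite double cover) of G and let the clumps of Ḡ be defined from this cluster structure. Then Ḡ has at most 3·r·β·n² edges with ends in different clumps. -/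
open SimpleGraph

/-- The number of edges of `G` with both ends in `X` or both ends in `Y`. -/
noncomputable def badEdges {V : Type*} (G : SimpleGraph V) (X Y : Set V) : ℕ :=
  {e : Sym2 V | e ∈ G.edgeSet ∧ ((∀ v ∈ e, v ∈ X) ∨ (∀ v ∈ e, v ∈ Y))}.ncard

/-- The lift (bipartite double cover) of `G`: vertices are two copies of `V(G)`
(`Sum.inl` is the first copy, `Sum.inr` the second) and `u⁽¹⁾v⁽²⁾` is an edge iff
`uv ∈ E(G)`. -/
def lift {V : Type*} (G : SimpleGraph V) : SimpleGraph (V ⊕ V) :=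
  SimpleGraph.fromRel fun x y =>
    ∃ u v : V, x = Sum.inl u ∧ y = Sum.inr v ∧ G.Adj u v

/-- The clumps of the lift of `G`, given clusters `A i` with designation `near i`
(in which case `A i` is split as `X i ∪ Y i`). -/
def clumps {V : Type*} {r : ℕ} (A X Y : Fin r → Set V) (near : Fin r → Prop) :
    Set (Set (V ⊕ V)) :=
  {S | ∃ i,
    (near i ∧ (S = Sum.inl '' X i ∪ Sum.inr '' Y i ∨
               S = Sum.inl '' Y i ∪ Sum.inr '' X i)) ∨
    (¬ near i ∧ S = Sum.inl '' A i ∪ Sum.inr '' A i)}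
/-!
An edge `u⁽¹⁾v⁽²⁾` of the lift that lies in no clump comes from an edge `uv` of `G` that either
joins two clusters or lies inside one side `X i` or `Y i` of a near-bipartite cluster. Each edge
of `G` has only two preimages in the lift, so there are at most `2 (η n² + r β n²) ≤ 3 r β n²`
such edges.
-/

open Sum

def crossEdges {V : Type*} (G : SimpleGraph V) (P : Set (Set V)) : Set (Sym2 V) :=
  {e | e ∈ G.edgeSet ∧ ¬ ∃ S ∈ P, ∀ v ∈ e, v ∈ S}

def badEdgeSet {V : Type*} (G : SimpleGraph V) (X Y : Set V) : Set (Sym2 V) :=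
  {e | e ∈ G.edgeSet ∧ ((∀ v ∈ e, v ∈ X) ∨ (∀ v ∈ e, v ∈ Y))}

section

variable {V : Type*} {G : SimpleGraph V}

theorem lift_adj_inl_inr {u v : V} : (lift G).Adj (inl u) (inr v) ↔ G.Adj u v := by
  simp [lift]

theorem exists_eq_mk_inl_inr_of_mem_edgeSet_lift {e : Sym2 (V ⊕ V)}
    (he : e ∈ (lift G).edgeSet) : ∃ u v, G.Adj u v ∧ e = s(inl u, inr v) := by
  induction e using Sym2.ind with
  | _ x y =>
    obtain ⟨-, ⟨u, v, rfl, rfl, huv⟩ | ⟨u, v, rfl, rfl, huv⟩⟩ := he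
    · exact ⟨u, v, huv, rfl⟩
    · exact ⟨u, v, huv, Sym2.eq_swap⟩

/-- Identifying the two copies of `V` is at most two-to-one on pairs joining the copies. -/
theorem ncard_le_two_mul_ncard_of_mapsTo_fold [Finite V] {C : Set (Sym2 (V ⊕ V))}
    {T : Set (Sym2 V)} (hC : ∀ e ∈ C, ∃ u v, e = s(inl u, inr v))
    (hCT : Set.MapsTo (Sym2.map (Sum.elim id id)) C T) : C.ncard ≤ 2 * T.ncard := by
  classical
  have := Fintype.ofFinite V
  rw [Set.ncard_eq_toFinset_card' C, Set.ncard_eq_toFinset_card' T]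
  have hmaps : ∀ e ∈ C.toFinset, Sym2.map (Sum.elim id id) e ∈ T.toFinset := fun e he ↦ by
    simpa using hCT (Set.mem_toFinset.mp he)
  refine Finset.card_le_mul_card_image_of_maps_to hmaps 2 fun b _ ↦ ?_
  induction b using Sym2.ind with
  | _ p q =>
    have hfiber : {e ∈ C.toFinset | Sym2.map (Sum.elim id id) e = s(p, q)} ⊆
        {s(inl p, inr q), s(inl q, inr p)} := by
      intro e he
      obtain ⟨heC, hfold⟩ := Finset.mem_filter.mp he
      obtain ⟨u, v, rfl⟩ := hC e (Set.mem_toFinset.mp heC)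
      simp only [Sym2.map_mk, elim_inl, elim_inr, id, Sym2.eq_iff] at hfold
      rcases hfold with ⟨rfl, rfl⟩ | ⟨rfl, rfl⟩ <;> simp
    exact (Finset.card_le_card hfiber).trans Finset.card_le_two

variable {r : ℕ} {A X Y : Fin r → Set V} {near : Fin r → Prop}

theorem exists_mem_clumps_mk_inl_inr_iff {u v : V} :
    (∃ S ∈ clumps A X Y near, ∀ w ∈ s(inl u, inr v), w ∈ S) ↔
      ∃ i, near i ∧ (u ∈ X i ∧ v ∈ Y i ∨ u ∈ Y i ∧ v ∈ X i) ∨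
        ¬ near i ∧ u ∈ A i ∧ v ∈ A i := by
  constructor
  · rintro ⟨S, ⟨i, ⟨hi, rfl | rfl⟩ | ⟨hi, rfl⟩⟩, hS⟩ <;> simp at hS <;> exact ⟨i, by tauto⟩
  · rintro ⟨i, ⟨hi, h | h⟩ | ⟨hi, h⟩⟩
    · exact ⟨_, ⟨i, .inl ⟨hi, .inl rfl⟩⟩, by simpa using h⟩
    · exact ⟨_, ⟨i, .inl ⟨hi, .inr rfl⟩⟩, by simpa using h⟩
    · exact ⟨_, ⟨i, .inr ⟨hi, rfl⟩⟩, by simpa using h⟩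

theorem mk_mem_crossEdges_or_badEdgeSet (hXY : ∀ i, near i → X i ∪ Y i = A i) {u v : V}
    (h : s(inl u, inr v) ∈ crossEdges (lift G) (clumps A X Y near)) :
    s(u, v) ∈ crossEdges G (Set.range A) ∨ ∃ i, near i ∧ s(u, v) ∈ badEdgeSet G (X i) (Y i) := by
  obtain ⟨hadj, hnot⟩ := h
  rw [exists_mem_clumps_mk_inl_inr_iff] at hnot
  have huv : G.Adj u v := lift_adj_inl_inr.mp hadj
  by_cases hsame : ∃ i, u ∈ A i ∧ v ∈ A i
  · obtain ⟨i, hu, hv⟩ := hsame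
    have hi : near i := by_contra fun hi ↦ hnot ⟨i, .inr ⟨hi, hu, hv⟩⟩
    rw [← hXY i hi] at hu hv
    have hsplit : ¬ (u ∈ X i ∧ v ∈ Y i ∨ u ∈ Y i ∧ v ∈ X i) := fun h ↦ hnot ⟨i, .inl ⟨hi, h⟩⟩
    refine .inr ⟨i, hi, huv, ?_⟩
    rw [Sym2.forall_mem_pair, Sym2.forall_mem_pair]
    rcases hu with hu | hu <;> rcases hv with hv | hv <;> tauto
  · refine .inl ⟨huv, ?_⟩
    rintro ⟨_, ⟨i, rfl⟩, hi⟩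
    exact hsame ⟨i, hi u (Sym2.mem_mk_left u v), hi v (Sym2.mem_mk_right u v)⟩

theorem ncard_crossEdges_lift_le [Finite V] [DecidablePred near]
    (hXY : ∀ i, near i → X i ∪ Y i = A i) :
    (crossEdges (lift G) (clumps A X Y near)).ncard ≤
      2 * ((crossEdges G (Set.range A)).ncard + ∑ i with near i, badEdges G (X i) (Y i)) := by
  calc (crossEdges (lift G) (clumps A X Y near)).ncard
      ≤ 2 * (crossEdges G (Set.range A) ∪
          ⋃ i ∈ ({i | near i} : Finset (Fin r)), badEdgeSet G (X i) (Y i)).ncard := by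
        apply ncard_le_two_mul_ncard_of_mapsTo_fold
        · intro e he
          obtain ⟨u, v, -, rfl⟩ := exists_eq_mk_inl_inr_of_mem_edgeSet_lift he.1
          exact ⟨u, v, rfl⟩
        · intro e he
          obtain ⟨u, v, -, rfl⟩ := exists_eq_mk_inl_inr_of_mem_edgeSet_lift he.1
          rcases mk_mem_crossEdges_or_badEdgeSet hXY he with h | ⟨i, hi, h⟩
          · simpa using .inl h
          · simpa using .inr ⟨i, hi, h⟩
    _ ≤ 2 * ((crossEdges G (Set.range A)).ncard + ∑ i with near i, badEdges G (X i) (Y i)) := by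
        gcongr
        exact (Set.ncard_union_le _ _).trans
          (Nat.add_le_add_left (Finset.set_ncard_biUnion_le _ _) _)

end

/-- **Few edges of the lift cross between clumps** (Observation 4.1). -/
theorem lift_few_cross_clump_edges :
    ∀ (V : Type) [Fintype V] (G : SimpleGraph V) (n r : ℕ) (η β : ℝ),
      Fintype.card V = n →
    ∀ (A X Y : Fin r → Set V) (near : Fin r → Prop),
      Pairwise (fun i j => Disjoint (A i) (A j)) →
      (⋃ i, A i) = Set.univ →
      (({e : Sym2 V | e ∈ G.edgeSet ∧ ¬ ∃ i, ∀ v ∈ e, v ∈ A i}.ncard : ℝ) ≤ η * n ^ 2) →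
      η ≤ r * β / 2 →
      (∀ i, near i → X i ∪ Y i = A i ∧ Disjoint (X i) (Y i) ∧
        (badEdges G (X i) (Y i) : ℝ) ≤ β * n ^ 2) →
      (({e : Sym2 (V ⊕ V) | e ∈ (lift G).edgeSet ∧
          ¬ ∃ S ∈ clumps A X Y near, ∀ v ∈ e, v ∈ S}.ncard : ℝ) ≤ 3 * r * β * n ^ 2) := by
  classical
  intro V _ G n r η β _ A X Y near _ _ hcross hηβ hnear
  have hcount := ncard_crossEdges_lift_le (G := G) fun i hi ↦ (hnear i hi).1
  simp only [crossEdges, Set.exists_range_iff] at hcount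
  have hη₀ : 0 ≤ η * n ^ 2 := (Nat.cast_nonneg _).trans hcross
  have hη : 2 * (η * n ^ 2) ≤ r * (β * n ^ 2) := by
    linarith [mul_le_mul_of_nonneg_right hηβ (sq_nonneg (n : ℝ))]
  have hβ (i : Fin r) : 0 ≤ β * n ^ 2 :=
    nonneg_of_mul_nonneg_right (a := (r : ℝ)) (by linarith) (by exact_mod_cast i.pos)
  have hbad : (∑ i with near i, (badEdges G (X i) (Y i) : ℝ)) ≤ r * (β * n ^ 2) := calc
    _ ≤ ∑ i with near i, β * n ^ 2 :=
      Finset.sum_le_sum fun i hi ↦ (hnear i (Finset.mem_filter.mp hi).2).2.2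
    _ ≤ ∑ i, β * n ^ 2 :=
      Finset.sum_le_sum_of_subset_of_nonneg (Finset.filter_subset _ _) fun i _ _ ↦ hβ i
    _ = r * (β * n ^ 2) := by simp
  have hcount' := (Nat.cast_le (α := ℝ)).mpr hcount
  push_cast at hcount'
  linarith
end

section
/- Let H be a bipartite graph with vertex classes V¹ and V² whose vertex set is partitioned into sets Ā₁, …, Ā_s; write B_i = Ā_i ∩ V¹ and T_i = Ā_i ∩ V². A fractional matching in H is a function w assigning to each edge a weight in [0,1] such that for every vertex v the total weight w(v) of edges incident to v is at most 1; for U ⊆ V(H) write w(U) = Σ_{v ∈ U} w(v). Suppose there exists a fractional matching w in H with Σ_{i=1}^{s} | (|T_i| − w(T_i)) − (|B_i| − w(B_i)) | ≤ 0.9. Then H contains a matching M such that |T_i \ V(M)| = |B_i \ V(M)| for every i ∈ [s]. -/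
/-!
Write `r v = 1 - w(v)` for the slack of a vertex. Adding the weight
`r t * r b / max (r(Tᵢ)) (r(Bᵢ))` to every pair `t ∈ Tᵢ`, `b ∈ Bᵢ` turns `w` into a fractional
matching between `V²` and `V¹` in `H` enlarged by all pairs inside the parts: rows and columns
still sum to at most `1`, and the total weight falls short of `|V²|` by at most
`∑ᵢ |r(Tᵢ) - r(Bᵢ)| ≤ 0.9 < 1`. A deficiency below `1` forces Hall's condition, and by symmetry
`|V¹| = |V²|`, so some bijection `f : V² → V¹` pairs each `t` with an `H`-neighbour or with a
vertex of its own part. The `H`-edges `t f(t)` form `M`, and the remaining pairs match the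
uncovered vertices of each `Tᵢ` with those of `Bᵢ`.
-/

open SimpleGraph Finset

/-- The total weight at `v` of an edge-weighting `w` (the "vertex weight" of a fractional
matching). -/
noncomputable def vertWeight {V : Type*} [Fintype V] (H : SimpleGraph V)
    [DecidableRel H.Adj] (w : Sym2 V → ℝ) (v : V) : ℝ :=
  ∑ u ∈ Finset.univ.filter (fun u => H.Adj v u), w s(v, u)

theorem exists_injective_pos_of_card_sub_one_lt_sum {ι α : Type*} [Fintype ι] [Fintype α]
    [DecidableEq α] (W : ι → α → ℝ) (hW : ∀ i a, 0 ≤ W i a) (hrow : ∀ i, ∑ a, W i a ≤ 1)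
    (hcol : ∀ a, ∑ i, W i a ≤ 1) (htot : (Fintype.card ι : ℝ) - 1 < ∑ i, ∑ a, W i a) :
    ∃ f : ι → α, Function.Injective f ∧ ∀ i, 0 < W i (f i) := by
  classical
  set t : ι → Finset α := fun i => {a | 0 < W i a}
  suffices hall : ∀ s : Finset ι, #s ≤ #(s.biUnion t) by
    obtain ⟨f, hf, hft⟩ := (all_card_le_biUnion_card_iff_exists_injective t).1 hall
    exact ⟨f, hf, fun i => (mem_filter.1 (hft i)).2⟩
  intro s
  set N := s.biUnion t
  have hout : ∑ i ∈ sᶜ, ∑ a, W i a ≤ #sᶜ := by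
    simpa using sum_le_sum fun i (_ : i ∈ sᶜ) => hrow i
  have hin : ∑ i ∈ s, ∑ a, W i a ≤ #N := calc
    ∑ i ∈ s, ∑ a, W i a = ∑ i ∈ s, ∑ a ∈ N, W i a := by
      refine sum_congr rfl fun i hi => (sum_subset (subset_univ _) fun a _ ha => ?_).symm
      by_contra hne
      exact ha (mem_biUnion.2 ⟨i, hi, mem_filter.2 ⟨mem_univ a, (hW i a).lt_of_ne' hne⟩⟩)
    _ ≤ ∑ i, ∑ a ∈ N, W i a :=
      sum_le_sum_of_subset_of_nonneg (subset_univ s) fun i _ _ => sum_nonneg fun a _ => hW i a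
    _ = ∑ a ∈ N, ∑ i, W i a := sum_comm
    _ ≤ ∑ _a ∈ N, 1 := sum_le_sum fun a _ => hcol a
    _ = #N := by simp
  have hcard : (#sᶜ : ℝ) = Fintype.card ι - #s := by
    rw [card_compl, Nat.cast_sub (card_le_univ s)]
  rw [← sum_add_sum_compl s] at htot
  have : (#s : ℝ) < #N + 1 := by linarith
  exact_mod_cast Nat.lt_succ_iff.1 (by exact_mod_cast this)

theorem sub_mul_div_max_le_abs_sub {x y : ℝ} (hx : 0 ≤ x) (hy : 0 ≤ y) :
    x - x * y / max x y ≤ |x - y| := by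
  rcases le_total x y with hxy | hyx
  · rw [max_eq_right hxy]
    rcases hy.eq_or_lt with rfl | hy
    · simp [le_antisymm hxy hx]
    · rw [mul_div_cancel_right₀ _ hy.ne']
      simp
  · rw [max_eq_left hyx]
    rcases hx.eq_or_lt with rfl | hx
    · simp
    · rw [mul_div_cancel_left₀ _ hx.ne']
      exact le_abs_self _

theorem exists_injective_of_sum_abs_sub_lt_one {X Y ι : Type*} [Fintype X] [Fintype Y]
    [DecidableEq Y] [Fintype ι] [DecidableEq ι]
    (w : X → Y → ℝ) (hw : ∀ x y, 0 ≤ w x y) (hrow : ∀ x, ∑ y, w x y ≤ 1)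
    (hcol : ∀ y, ∑ x, w x y ≤ 1) (p : X → ι) (q : Y → ι)
    (hbal : ∑ i, |∑ x with p x = i, (1 - ∑ y, w x y) - ∑ y with q y = i, (1 - ∑ x, w x y)| < 1) :
    ∃ f : X → Y, Function.Injective f ∧ ∀ x, 0 < w x (f x) ∨ p x = q (f x) := by
  set r : X → ℝ := fun x => 1 - ∑ y, w x y
  set c : Y → ℝ := fun y => 1 - ∑ x, w x y
  set R : ι → ℝ := fun i => ∑ x with p x = i, r x
  set C : ι → ℝ := fun i => ∑ y with q y = i, c y
  set m : ι → ℝ := fun i => max (R i) (C i)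
  have hr (x : X) : 0 ≤ r x := sub_nonneg.2 (hrow x)
  have hc (y : Y) : 0 ≤ c y := sub_nonneg.2 (hcol y)
  have hR (i : ι) : 0 ≤ R i := sum_nonneg fun x _ => hr x
  have hC (i : ι) : 0 ≤ C i := sum_nonneg fun y _ => hc y
  have hm (i : ι) : 0 ≤ m i := (hR i).trans (le_max_left _ _)
  have hRm (i : ι) : R i / m i ≤ 1 := div_le_one_of_le₀ (le_max_left _ _) (hm i)
  have hCm (i : ι) : C i / m i ≤ 1 := div_le_one_of_le₀ (le_max_right _ _) (hm i)
  set W : X → Y → ℝ := fun x y => w x y + if p x = q y then r x * c y / m (p x) else 0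
  have hW (x : X) (y : Y) : 0 ≤ W x y := by
    refine add_nonneg (hw x y) ?_
    split_ifs
    · exact div_nonneg (mul_nonneg (hr x) (hc y)) (hm _)
    · exact le_rfl
  have hrowW (x : X) : ∑ y, W x y = 1 - r x + r x * (C (p x) / m (p x)) := by
    have : ∑ y with p x = q y, r x * c y / m (p x) = r x * (C (p x) / m (p x)) := by
      simp only [C, mul_div_assoc, ← mul_sum, ← sum_div, eq_comm]
    simp only [W, sum_add_distrib, ← sum_filter, this, r]
    ring
  have hcolW (y : Y) : ∑ x, W x y = 1 - c y + R (q y) / m (q y) * c y := by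
    have : ∑ x with p x = q y, r x * c y / m (p x) = R (q y) / m (q y) * c y := by
      simp only [R, div_mul_eq_mul_div, sum_mul, sum_div]
      exact sum_congr rfl fun x hx => by rw [(mem_filter.1 hx).2]
    simp only [W, sum_add_distrib, ← sum_filter, this, c]
    ring
  have htot : ∑ x, ∑ y, W x y = Fintype.card X - ∑ i, (R i - R i * C i / m i) := by
    have hsum_r : ∑ x, r x = ∑ i, R i := (sum_fiberwise _ p r).symm
    have hsum_rC : ∑ x, r x * (C (p x) / m (p x)) = ∑ i, R i * (C i / m i) := by
      rw [← sum_fiberwise _ p]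
      exact sum_congr rfl fun i _ => by
        rw [sum_mul]; exact sum_congr rfl fun x hx => by rw [(mem_filter.1 hx).2]
    simp only [hrowW, sum_add_distrib, sum_sub_distrib, hsum_r, hsum_rC, sum_const, card_univ,
      nsmul_eq_mul, mul_one, mul_div_assoc]
    ring
  have hdef : ∑ i, (R i - R i * C i / m i) < 1 :=
    (sum_le_sum fun i _ => sub_mul_div_max_le_abs_sub (hR i) (hC i)).trans_lt hbal
  obtain ⟨f, hf, hpos⟩ := exists_injective_pos_of_card_sub_one_lt_sum W hW
    (fun x => by rw [hrowW]; nlinarith [hr x, hCm (p x)])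
    (fun y => by rw [hcolW]; nlinarith [hc y, hRm (q y)])
    (by rw [htot]; linarith)
  refine ⟨f, hf, fun x => ?_⟩
  by_contra! h
  have := hpos x
  simp only [W, if_neg h.2, add_zero] at this
  linarith [h.1]

theorem exists_bijective_of_sum_abs_sub_lt_one {X Y ι : Type*} [Fintype X] [Fintype Y]
    [DecidableEq X] [DecidableEq Y] [Fintype ι] [DecidableEq ι]
    (w : X → Y → ℝ) (hw : ∀ x y, 0 ≤ w x y) (hrow : ∀ x, ∑ y, w x y ≤ 1)
    (hcol : ∀ y, ∑ x, w x y ≤ 1) (p : X → ι) (q : Y → ι)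
    (hbal : ∑ i, |∑ x with p x = i, (1 - ∑ y, w x y) - ∑ y with q y = i, (1 - ∑ x, w x y)| < 1) :
    ∃ f : X → Y, Function.Bijective f ∧ ∀ x, 0 < w x (f x) ∨ p x = q (f x) := by
  obtain ⟨f, hf, hfpq⟩ := exists_injective_of_sum_abs_sub_lt_one w hw hrow hcol p q hbal
  obtain ⟨g, hg, -⟩ := exists_injective_of_sum_abs_sub_lt_one (fun y x => w x y)
    (fun y x => hw x y) hcol hrow q p ((sum_congr rfl fun i _ => abs_sub_comm _ _).trans_lt hbal)
  exact ⟨f, (Fintype.bijective_iff_injective_and_card f).2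
    ⟨hf, (Fintype.card_le_of_injective f hf).antisymm (Fintype.card_le_of_injective g hg)⟩, hfpq⟩

theorem exists_eq_iff_mem_of_pairwise_disjoint {α ι : Type*} {A : ι → Finset α}
    (hA : Pairwise fun i j => Disjoint (A i) (A j)) (hcov : ∀ a, ∃ i, a ∈ A i) :
    ∃ p : α → ι, ∀ a i, a ∈ A i ↔ p a = i := by
  choose p hp using hcov
  refine ⟨p, fun a i => ⟨fun h => ?_, fun h => h ▸ hp a⟩⟩
  by_contra hne
  exact Finset.disjoint_left.1 (hA hne) (hp a) h

theorem vertWeight_eq_sum_of_adj_mem {V : Type*} [Fintype V] {H : SimpleGraph V}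
    [DecidableRel H.Adj] (w : Sym2 V → ℝ) {v : V} {S : Finset V} (hS : ∀ u, H.Adj v u → u ∈ S) :
    vertWeight H w v = ∑ u ∈ S, if H.Adj v u then w s(v, u) else 0 := by
  rw [vertWeight, ← sum_filter]
  congr 1
  ext u
  simpa using hS u

theorem exists_bijective_adj_or_eq_of_sum_abs_sub_lt_one {V ι : Type*} [Fintype V] [DecidableEq V]
    [Fintype ι] [DecidableEq ι] {H : SimpleGraph V} [DecidableRel H.Adj] {X Y : Finset V}
    (hX : ∀ x ∈ X, ∀ u, H.Adj x u → u ∈ Y) (hY : ∀ y ∈ Y, ∀ u, H.Adj y u → u ∈ X)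
    {w : Sym2 V → ℝ} (hw : ∀ e ∈ H.edgeSet, 0 ≤ w e) (hw1 : ∀ v, vertWeight H w v ≤ 1)
    (p : V → ι) (hbal : ∑ i, |∑ x ∈ X with p x = i, (1 - vertWeight H w x) -
      ∑ y ∈ Y with p y = i, (1 - vertWeight H w y)| < 1) :
    ∃ f : X → Y, Function.Bijective f ∧ ∀ x : X, H.Adj x (f x) ∨ p x = p (f x) := by
  set W : X → Y → ℝ := fun x y => if H.Adj x y then w s(x, y) else 0
  have hW (x : X) (y : Y) : 0 ≤ W x y := by
    simp only [W]
    split_ifs with h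
    · exact hw _ (H.mem_edgeSet.2 h)
    · exact le_rfl
  have hrow (x : X) : ∑ y, W x y = vertWeight H w x := by
    rw [sum_coe_sort Y fun y => if H.Adj x y then w s(x, y) else 0,
      vertWeight_eq_sum_of_adj_mem w (hX x x.2)]
  have hcol (y : Y) : ∑ x, W x y = vertWeight H w y := by
    rw [sum_coe_sort X fun x => if H.Adj x y then w s(x, y) else 0,
      vertWeight_eq_sum_of_adj_mem w (hY y y.2)]
    refine sum_congr rfl fun x _ => ?_
    by_cases h : H.Adj x y <;> simp [h, H.adj_comm, Sym2.eq_swap]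
  have hpart (S : Finset V) (i : ι) :
      ∑ x ∈ univ.filter (fun x : S => p x = i), (1 - vertWeight H w x) =
        ∑ v ∈ S with p v = i, (1 - vertWeight H w v) := by
    rw [sum_filter, sum_coe_sort S fun v => if p v = i then 1 - vertWeight H w v else 0,
      ← sum_filter]
  obtain ⟨f, hf, hfp⟩ := exists_bijective_of_sum_abs_sub_lt_one W hW
    (fun x => (hrow x).trans_le (hw1 x)) (fun y => (hcol y).trans_le (hw1 y)) (fun x => p x)
    (fun y => p y) (by simpa only [hrow, hcol, hpart] using hbal)
  refine ⟨f, hf, fun x => (hfp x).imp_left fun h => ?_⟩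
  by_contra hadj
  simp [W, hadj] at h

namespace SimpleGraph

variable {V : Type*} (H : SimpleGraph V) {X Y : Set V} (f : X → Y)

def pairingSubgraph : H.Subgraph := ⨆ x : {x : X // H.Adj x (f x)}, H.subgraphOfAdj x.2

variable {H f}

theorem mem_verts_pairingSubgraph {v : V} :
    v ∈ (H.pairingSubgraph f).verts ↔ ∃ x : X, H.Adj x (f x) ∧ (v = x ∨ v = f x) := by
  simp [pairingSubgraph, Subgraph.verts_iSup]

theorem coe_mem_verts_pairingSubgraph (hXY : Disjoint X Y) (x : X) :
    (x : V) ∈ (H.pairingSubgraph f).verts ↔ H.Adj x (f x) := by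
  refine mem_verts_pairingSubgraph.trans ⟨?_, fun h => ⟨x, h, .inl rfl⟩⟩
  rintro ⟨x', h, hx | hx⟩
  · rwa [Subtype.val_injective hx]
  · exact absurd (hx ▸ (f x').2) (Set.disjoint_left.1 hXY x.2)

theorem coe_apply_mem_verts_pairingSubgraph (hXY : Disjoint X Y) (hf : Function.Injective f)
    (x : X) : (f x : V) ∈ (H.pairingSubgraph f).verts ↔ H.Adj x (f x) := by
  refine mem_verts_pairingSubgraph.trans ⟨?_, fun h => ⟨x, h, .inr rfl⟩⟩
  rintro ⟨x', h, hx | hx⟩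
  · exact absurd (hx ▸ x'.2) (Set.disjoint_right.1 hXY (f x).2)
  · rwa [hf (Subtype.val_injective hx)]

theorem isMatching_pairingSubgraph (hXY : Disjoint X Y) (hf : Function.Injective f) :
    (H.pairingSubgraph f).IsMatching := by
  refine Subgraph.IsMatching.iSup (fun x => .subgraphOfAdj x.2) fun x x' hne => ?_
  simp only [support_subgraphOfAdj, Set.disjoint_insert_left, Set.disjoint_insert_right,
    Set.disjoint_singleton, Set.mem_insert_iff, Set.mem_singleton_iff, not_or]
  have hne' : (x : X) ≠ x' := fun h => hne (Subtype.ext h)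
  have hXY' (a : X) (b : Y) : (a : V) ≠ b := fun h => Set.disjoint_left.1 hXY a.2 (h ▸ b.2)
  exact ⟨⟨fun h => hne' (Subtype.val_injective h).symm, hXY' _ _⟩, hXY' _ _,
    fun h => hne' (hf (Subtype.val_injective h))⟩

theorem ncard_inter_sdiff_verts_pairingSubgraph (hXY : Disjoint X Y) (hf : Function.Bijective f)
    (A : Set V) (hA : ∀ x : X, ¬H.Adj x (f x) → ((x : V) ∈ A ↔ (f x : V) ∈ A)) :
    ((A ∩ X) \ (H.pairingSubgraph f).verts).ncard =
      ((A ∩ Y) \ (H.pairingSubgraph f).verts).ncard := by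
  set S : Set X := {x | (x : V) ∈ A ∧ ¬H.Adj x (f x)}
  have hX : (A ∩ X) \ (H.pairingSubgraph f).verts = Subtype.val '' S := by
    ext v
    constructor
    · rintro ⟨⟨hvA, hvX⟩, hv⟩
      exact ⟨⟨v, hvX⟩, ⟨hvA, by rwa [← coe_mem_verts_pairingSubgraph hXY]⟩, rfl⟩
    · rintro ⟨x, ⟨hxA, hx⟩, rfl⟩
      exact ⟨⟨hxA, x.2⟩, by rwa [coe_mem_verts_pairingSubgraph hXY]⟩
  have hY : (A ∩ Y) \ (H.pairingSubgraph f).verts = (Subtype.val ∘ f) '' S := by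
    ext v
    constructor
    · rintro ⟨⟨hvA, hvY⟩, hv⟩
      obtain ⟨x, hx⟩ := hf.2 ⟨v, hvY⟩
      obtain rfl : (f x : V) = v := congrArg Subtype.val hx
      have hadj := (coe_apply_mem_verts_pairingSubgraph hXY hf.1 x).not.1 hv
      exact ⟨x, ⟨(hA x hadj).2 hvA, hadj⟩, rfl⟩
    · rintro ⟨x, ⟨hxA, hx⟩, rfl⟩
      exact ⟨⟨(hA x hx).1 hxA, (f x).2⟩, (coe_apply_mem_verts_pairingSubgraph hXY hf.1 x).not.2 hx⟩
  rw [hX, hY, Set.ncard_image_of_injective _ Subtype.val_injective,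
    Set.ncard_image_of_injective _ (Subtype.val_injective.comp hf.1)]

end SimpleGraph

/-- **From an almost balancing fractional matching to a balancing matching**
(Step 2 of the proof of Lemma 4.1): if a bipartite graph `H`, with classes `V¹, V²` and
vertex set partitioned into `Ā₁, …, Ā_s` (with `B_i = Ā_i ∩ V¹`, `T_i = Ā_i ∩ V²`),
carries a fractional matching `w` with `∑ᵢ |(|T_i| − w(T_i)) − (|B_i| − w(B_i))| ≤ 0.9`,
then `H` has a matching balancing every `Ā_i`. -/
theorem fractional_to_balancing_matching :
    ∀ (V : Type) [Fintype V] [DecidableEq V] (H : SimpleGraph V) [DecidableRel H.Adj]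
      (V1 V2 : Finset V),
      V1 ∪ V2 = Finset.univ → Disjoint V1 V2 →
      (∀ u v : V, H.Adj u v → (u ∈ V1 ∧ v ∈ V2) ∨ (u ∈ V2 ∧ v ∈ V1)) →
    ∀ (s : ℕ) (Abar : Fin s → Finset V),
      Pairwise (fun i j => Disjoint (Abar i) (Abar j)) →
      (∀ v : V, ∃ i, v ∈ Abar i) →
    ∀ w : Sym2 V → ℝ,
      (∀ e ∈ H.edgeSet, 0 ≤ w e ∧ w e ≤ 1) →
      (∀ v : V, vertWeight H w v ≤ 1) →
      (∑ i : Fin s,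
        |(((Abar i ∩ V2).card : ℝ) - ∑ v ∈ Abar i ∩ V2, vertWeight H w v) -
          (((Abar i ∩ V1).card : ℝ) - ∑ v ∈ Abar i ∩ V1, vertWeight H w v)| ≤ 0.9) →
    ∃ M : H.Subgraph, M.IsMatching ∧
      ∀ i : Fin s,
        (((Abar i ∩ V2 : Finset V) : Set V) \ M.verts).ncard =
          (((Abar i ∩ V1 : Finset V) : Set V) \ M.verts).ncard := by
  intro V _ _ H _ V1 V2 _ hdisj hbip s Abar hAdisj hAcov w hw01 hw1 hsum
  obtain ⟨p, hp⟩ := exists_eq_iff_mem_of_pairwise_disjoint hAdisj hAcov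
  have hV2 : ∀ t ∈ V2, ∀ u, H.Adj t u → u ∈ V1 := fun t ht u h =>
    (hbip t u h).resolve_left (fun h' => Finset.disjoint_left.1 hdisj h'.1 ht) |>.2
  have hV1 : ∀ b ∈ V1, ∀ u, H.Adj b u → u ∈ V2 := fun b hb u h =>
    (hbip b u h).resolve_right (fun h' => Finset.disjoint_left.1 hdisj hb h'.1) |>.2
  have hpart (S : Finset V) (i : Fin s) : {v ∈ S | p v = i} = Abar i ∩ S := by
    ext v
    simp [hp, and_comm]
  obtain ⟨f, hf, hfp⟩ := exists_bijective_adj_or_eq_of_sum_abs_sub_lt_one hV2 hV1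
    (fun e he => (hw01 e he).1) hw1 p (by
      simp only [hpart, sum_sub_distrib, sum_const, nsmul_eq_mul, mul_one]
      linarith)
  have hdisj' : Disjoint (V2 : Set V) V1 := disjoint_coe.2 hdisj.symm
  refine ⟨H.pairingSubgraph f, isMatching_pairingSubgraph hdisj' hf.1, fun i => ?_⟩
  rw [coe_inter, coe_inter]
  refine ncard_inter_sdiff_verts_pairingSubgraph hdisj' hf _ fun t ht => ?_
  simp only [mem_coe, hp, (hfp t).resolve_left ht]
end

section
/- For all constants c_min > 0 and δ > 0 there exists n₀ such that the following holds. Let n ≥ n₀, let G be a d-regular graph on n vertices with d ≥ c_min·n, and let V(G) be partitioned into r = ⌊n/(d+1)⌋ + 1 non-empty parts A₁, …, A_r, each of size at least δ·n. Then there exist distinct indices i, j ∈ [r] and two vertex-disjoint edges of G, each with one end in A_i and one end in A_j (i.e., a matching of size 2 between A_i and A_j). -/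
/-
If no two parts are joined by two disjoint edges, the edges between any two parts form a star,
so deleting the set `C` of at most `r²` star centres leaves no edge between different parts.
A vertex outside `C` then has all its neighbours in its own part or in `C`; writing `uⱼ` for the
number of vertices of the `j`-th part outside `C`, counting the edges from `V \ C` to `C` gives
`∑ⱼ uⱼ (d + 1 - uⱼ) ≤ d |C|`, and each `uⱼ` is at least `d + 1 - |C|`. Since
`∑ⱼ uⱼ < r (d + 1) - |C|`, the numbers `tⱼ = d + 1 - uⱼ` satisfy `∑ⱼ tⱼ ≥ 1 + |C|` and
`|tⱼ| ≤ r |C|`, whence `d < ∑ⱼ tⱼ² ≤ r³ |C|²`: the degree is bounded by a constant,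
contradicting `d ≥ c_min n` for large `n`.
-/

open SimpleGraph Finset

theorem exists_common_endpoint {α : Type*} [Nonempty α] (R : α → α → Prop)
    (h : ∀ a b a' b', R a b → R a' b' → a = a' ∨ b = b') :
    ∃ z, ∀ a b, R a b → a = z ∨ b = z := by
  by_cases hR : ∃ a b, R a b
  · obtain ⟨a₀, b₀, h₀⟩ := hR
    by_cases hall : ∀ a b, R a b → a = a₀
    · exact ⟨a₀, fun a b hab => .inl (hall a b hab)⟩
    push Not at hall
    obtain ⟨a₁, b₁, h₁, hne⟩ := hall
    have hb₁ : b₁ = b₀ := (h a₁ b₁ a₀ b₀ h₁ h₀).resolve_left hne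
    refine ⟨b₀, fun a b hab => or_iff_not_imp_right.mpr fun hb => ?_⟩
    have ha₀ : a = a₀ := (h a b a₀ b₀ hab h₀).resolve_right hb
    have ha₁ : a = a₁ := (h a b a₁ b₁ hab h₁).resolve_right (hb₁ ▸ hb)
    exact absurd (ha₁.symm.trans ha₀) hne
  · push Not at hR
    exact ⟨Classical.arbitrary α, fun a b hab => absurd hab (hR a b)⟩

theorem Int.lt_card_pow_mul_sq_of_sum_mul_le {ι : Type*} [Fintype ι] (t : ι → ℤ) {d K : ℤ}
    (hd : 0 ≤ d) (hK : 0 ≤ K) (ht : ∀ j, t j ≤ K) (hsum : 1 + K ≤ ∑ j, t j)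
    (hdc : ∑ j, (d + 1 - t j) * t j ≤ d * K) :
    d < Fintype.card ι ^ 3 * K ^ 2 := by
  set r : ℤ := (Fintype.card ι : ℤ)
  have hlow : ∀ j, -(r * K) ≤ t j := by
    intro j
    have hj : K - t j ≤ ∑ k, (K - t k) :=
      single_le_sum (fun k _ => sub_nonneg.mpr (ht k)) (mem_univ j)
    rw [sum_sub_distrib, sum_const, card_univ, nsmul_eq_mul] at hj
    linarith
  have hsq : ∀ j, t j ^ 2 ≤ (r * K) ^ 2 := by
    intro j
    have hr : 1 ≤ r := Int.ofNat_le.mpr (Fintype.card_pos_iff.mpr ⟨j⟩)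
    exact sq_le_sq' (hlow j) ((ht j).trans (le_mul_of_one_le_left hK hr))
  have hsq_sum : ∑ j, t j ^ 2 ≤ r * (r * K) ^ 2 := by
    simpa [r] using sum_le_card_nsmul univ (fun j => t j ^ 2) _ fun j _ => hsq j
  have hexpand : ∑ j, (d + 1 - t j) * t j = (d + 1) * ∑ j, t j - ∑ j, t j ^ 2 := by
    simp only [mul_sum, ← sum_sub_distrib]
    exact sum_congr rfl fun j _ => by ring
  nlinarith

namespace SimpleGraph

variable {V ι : Type*} {G : SimpleGraph V}

def SeparatesFibers (G : SimpleGraph V) (π : V → ι) (C : Finset V) : Prop :=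
  ∀ ⦃v w⦄, G.Adj v w → v ∉ C → w ∉ C → π v = π w

theorem exists_separatesFibers [DecidableEq V] [Fintype ι] (π : V → ι)
    (h : ∀ ⦃x₁ y₁ x₂ y₂⦄, π x₁ ≠ π x₂ → π y₁ = π x₁ → π y₂ = π x₂ →
      G.Adj x₁ x₂ → G.Adj y₁ y₂ → x₁ = y₁ ∨ x₂ = y₂) :
    ∃ C : Finset V, #C ≤ Fintype.card ι ^ 2 ∧ G.SeparatesFibers π C := by
  rcases isEmpty_or_nonempty V with hV | hV
  · exact ⟨∅, by simp, fun v => hV.elim v⟩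
  choose c hc using fun i j : ι =>
    exists_common_endpoint (fun u w => i ≠ j ∧ π u = i ∧ π w = j ∧ G.Adj u w) <| by
      rintro a b a' b' ⟨hij, rfl, rfl, hab⟩ ⟨-, ha', hb', hab'⟩
      exact h hij ha' hb' hab hab'
  refine ⟨univ.image fun p : ι × ι => c p.1 p.2, ?_, fun v w hvw hv hw => ?_⟩
  · exact card_image_le.trans (by simp [sq])
  · by_contra hne
    have hmem : c (π v) (π w) ∈ univ.image fun p : ι × ι => c p.1 p.2 :=
      mem_image_of_mem _ (mem_univ (π v, π w))
    rcases hc (π v) (π w) v w ⟨hne, rfl, rfl, hvw⟩ with h' | h'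
    exacts [hv (h' ▸ hmem), hw (h' ▸ hmem)]

variable [Fintype V] [DecidableRel G.Adj]

theorem sum_card_filter_adj_le (s t : Finset V) :
    ∑ v ∈ s, #{w ∈ t | G.Adj v w} ≤ ∑ w ∈ t, G.degree w := by
  rw [show ∑ v ∈ s, #{w ∈ t | G.Adj v w} = ∑ w ∈ t, #{v ∈ s | G.Adj v w} from
    sum_card_bipartiteAbove_eq_sum_card_bipartiteBelow _]
  refine sum_le_sum fun w _ => card_le_card fun v hv => ?_
  simpa using (mem_filter.mp hv).2.symm

variable [DecidableEq V] [DecidableEq ι] {π : V → ι} {C : Finset V}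

theorem SeparatesFibers.degree_lt (hC : G.SeparatesFibers π C) {v : V} (hv : v ∉ C) :
    G.degree v < #{w ∈ Cᶜ | π w = π v} + #{w ∈ C | G.Adj v w} := by
  have hout : G.neighborFinset v \ C ⊆ ({w ∈ Cᶜ | π w = π v}).erase v := by
    intro w hw
    rw [mem_sdiff, mem_neighborFinset] at hw
    simp [hw.2, hC hw.1 hv hw.2, hw.1.ne']
  have hin : G.neighborFinset v ∩ C = {w ∈ C | G.Adj v w} := by
    ext w; simp [and_comm]
  calc G.degree v = #(G.neighborFinset v \ C) + #(G.neighborFinset v ∩ C) :=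
        (card_sdiff_add_card_inter _ _).symm
    _ ≤ #(({w ∈ Cᶜ | π w = π v}).erase v) + #{w ∈ C | G.Adj v w} := by
        rw [hin]; gcongr
    _ < #{w ∈ Cᶜ | π w = π v} + #{w ∈ C | G.Adj v w} :=
        Nat.add_lt_add_right (card_erase_lt_of_mem (by simpa using hv)) _

theorem SeparatesFibers.sum_card_mul_le [Fintype ι] {d : ℕ} (hreg : G.IsRegularOfDegree d)
    (hC : G.SeparatesFibers π C) :
    ∑ j, (#{v ∈ Cᶜ | π v = j} : ℤ) * (d + 1 - #{v ∈ Cᶜ | π v = j}) ≤ d * #C := by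
  calc ∑ j, (#{v ∈ Cᶜ | π v = j} : ℤ) * (d + 1 - #{v ∈ Cᶜ | π v = j})
      = ∑ j, ∑ v ∈ {v ∈ Cᶜ | π v = j}, ((d : ℤ) + 1 - #{w ∈ Cᶜ | π w = π v}) := by
        refine sum_congr rfl fun j _ => ?_
        rw [sum_congr rfl fun v hv => by rw [(mem_filter.mp hv).2], sum_const, nsmul_eq_mul]
    _ ≤ ∑ j, ∑ v ∈ {v ∈ Cᶜ | π v = j}, (#{w ∈ C | G.Adj v w} : ℤ) := by
        gcongr with j _ v hv
        have := hC.degree_lt (mem_compl.mp (mem_filter.mp hv).1)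
        rw [hreg v] at this
        omega
    _ = ∑ v ∈ Cᶜ, (#{w ∈ C | G.Adj v w} : ℤ) := sum_fiberwise _ _ _
    _ ≤ ∑ w ∈ C, (G.degree w : ℤ) := by exact_mod_cast sum_card_filter_adj_le Cᶜ C
    _ = d * #C := by simp [hreg _, mul_comm]

theorem SeparatesFibers.degree_lt_card_pow [Fintype ι] {d : ℕ} (hreg : G.IsRegularOfDegree d)
    (hC : G.SeparatesFibers π C) (hbig : ∀ j, #C < #{v | π v = j})
    (hn : Fintype.card V < Fintype.card ι * (d + 1)) :
    d < Fintype.card ι ^ 3 * #C ^ 2 := by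
  have hlow : ∀ j, d + 1 ≤ #{v ∈ Cᶜ | π v = j} + #C := by
    intro j
    have hfib : #{v | π v = j} ≤ #{v ∈ Cᶜ | π v = j} + #C := by
      refine (card_le_card fun v hv => ?_).trans (card_union_le _ C)
      by_cases hvC : v ∈ C <;> simp_all
    obtain ⟨v, hv⟩ : ({v ∈ Cᶜ | π v = j} : Finset V).Nonempty := by
      rw [← card_pos]; have := hbig j; omega
    have hdeg := hC.degree_lt (mem_compl.mp (mem_filter.mp hv).1)
    rw [hreg v, (mem_filter.mp hv).2] at hdeg
    have : #{w ∈ C | G.Adj v w} ≤ #C := card_filter_le _ _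
    omega
  have hsum : ∑ j, (#{v ∈ Cᶜ | π v = j} : ℤ) = Fintype.card V - #C := by
    rw [← Nat.cast_sum, ← card_eq_sum_card_fiberwise fun v _ => mem_univ (π v), card_compl,
      Nat.cast_sub (card_le_univ C)]
  have hnZ : (Fintype.card V : ℤ) < Fintype.card ι * (d + 1) := by exact_mod_cast hn
  have key := Int.lt_card_pow_mul_sq_of_sum_mul_le (fun j => (d : ℤ) + 1 - #{v ∈ Cᶜ | π v = j})
    (Int.natCast_nonneg d) (Int.natCast_nonneg #C)
    (fun j => by have := hlow j; omega)
    (by rw [sum_sub_distrib, hsum, sum_const, card_univ, nsmul_eq_mul]; linarith)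
    (by simpa [sub_sub_cancel, mul_comm] using hC.sum_card_mul_le hreg)
  exact_mod_cast key

theorem exists_two_disjoint_edges_between_fibers [Fintype ι] {d : ℕ}
    (hreg : G.IsRegularOfDegree d) (π : V → ι) (hbig : ∀ j, Fintype.card ι ^ 2 < #{v | π v = j})
    (hn : Fintype.card V < Fintype.card ι * (d + 1)) (hd : Fintype.card ι ^ 7 ≤ d) :
    ∃ x₁ y₁ x₂ y₂, π x₁ ≠ π x₂ ∧ π y₁ = π x₁ ∧ π y₂ = π x₂ ∧
      x₁ ≠ y₁ ∧ x₂ ≠ y₂ ∧ G.Adj x₁ x₂ ∧ G.Adj y₁ y₂ := by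
  by_contra! hno
  obtain ⟨C, hCcard, hC⟩ := exists_separatesFibers (G := G) π
    fun x₁ y₁ x₂ y₂ hne hy₁ hy₂ h₁ h₂ => by
      by_contra! h
      exact hno x₁ y₁ x₂ y₂ hne hy₁ hy₂ h.1 h.2 h₁ h₂
  have hdeg := hC.degree_lt_card_pow hreg (fun j => hCcard.trans_lt (hbig j)) hn
  have : Fintype.card ι ^ 3 * #C ^ 2 ≤ Fintype.card ι ^ 7 := calc
    _ ≤ Fintype.card ι ^ 3 * (Fintype.card ι ^ 2) ^ 2 := by gcongr
    _ = Fintype.card ι ^ 7 := by ring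
  omega

end SimpleGraph

theorem Set.exists_eq_setOf_eq_of_pairwise_disjoint {α ι : Type*} {A : ι → Set α}
    (hdisj : Pairwise (fun i j => Disjoint (A i) (A j))) (hcover : ⋃ i, A i = Set.univ) :
    ∃ π : α → ι, ∀ i, A i = {a | π a = i} := by
  choose π hπ using fun a => Set.mem_iUnion.mp (hcover ▸ Set.mem_univ a)
  exact ⟨π, fun i => Set.ext fun a =>
    ⟨fun ha => by_contra fun hne => Set.disjoint_left.mp (hdisj hne) (hπ a) ha,
      fun h => h ▸ hπ a⟩⟩

theorem Nat.div_succ_le_ceil_inv {c : ℝ} (hc : 0 < c) {n d : ℕ} (hd : c * n ≤ d) :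
    n / (d + 1) ≤ ⌈c⁻¹⌉₊ := by
  refine Nat.div_le_of_le_mul ?_
  have : (n : ℝ) ≤ (d + 1) * ⌈c⁻¹⌉₊ :=
    calc (n : ℝ) = c⁻¹ * (c * n) := by field_simp
      _ ≤ ⌈c⁻¹⌉₊ * (d + 1) := by gcongr; exacts [Nat.le_ceil _, hd.trans (by linarith)]
      _ = (d + 1) * ⌈c⁻¹⌉₊ := mul_comm _ _
  exact_mod_cast this

theorem le_mul_of_ceil_div_le {x c : ℝ} (hc : 0 < c) {n : ℕ} (h : ⌈x / c⌉₊ ≤ n) : x ≤ c * n := by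
  rw [mul_comm, ← div_le_iff₀ hc]
  exact Nat.ceil_le.mp h

theorem lt_mul_of_ceil_div_lt {x c : ℝ} (hc : 0 < c) {n : ℕ} (h : ⌈x / c⌉₊ < n) : x < c * n := by
  rw [mul_comm, ← div_lt_iff₀ hc]
  exact Nat.lt_of_ceil_lt h

/-- **A matching of size 2 between two clusters** (from the proof of Theorem 1.1):
if the vertex set of a dense regular graph is partitioned into `⌊n/(d+1)⌋ + 1` non-empty
parts, each of linear size, then some two distinct parts are joined by two vertex-disjoint
edges. -/
theorem matching_of_size_two_between_clusters :
    ∀ c_min δ : ℝ, 0 < c_min → 0 < δ →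
    ∃ n₀ : ℕ, ∀ n : ℕ, n₀ ≤ n →
    ∀ (V : Type) [Fintype V] (G : SimpleGraph V) [DecidableRel G.Adj] (d : ℕ),
      Fintype.card V = n → G.IsRegularOfDegree d → c_min * n ≤ (d : ℝ) →
    ∀ A : Fin (n / (d + 1) + 1) → Set V,
      (∀ i, (A i).Nonempty) →
      Pairwise (fun i j => Disjoint (A i) (A j)) →
      (⋃ i, A i) = Set.univ →
      (∀ i, δ * n ≤ ((A i).ncard : ℝ)) →
    ∃ i j : Fin (n / (d + 1) + 1), i ≠ j ∧
      ∃ x₁ ∈ A i, ∃ y₁ ∈ A i, ∃ x₂ ∈ A j, ∃ y₂ ∈ A j,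
        x₁ ≠ y₁ ∧ x₂ ≠ y₂ ∧ G.Adj x₁ x₂ ∧ G.Adj y₁ y₂ := by
  intro c_min δ hc hδ
  set R := ⌈c_min⁻¹⌉₊ + 1
  refine ⟨⌈(R ^ 7 : ℝ) / c_min⌉₊ + ⌈(R ^ 2 : ℝ) / δ⌉₊ + 1, ?_⟩
  intro n hn V _ G _ d hcard hreg hd A _ hdisj hcover hsize
  classical
  have hrR : n / (d + 1) + 1 ≤ R := Nat.add_le_add_right (Nat.div_succ_le_ceil_inv hc hd) 1
  have hdR : (R : ℝ) ^ 7 ≤ d := (le_mul_of_ceil_div_le hc (by omega)).trans hd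
  have hδR : (R : ℝ) ^ 2 < δ * n := lt_mul_of_ceil_div_lt hδ (by omega)
  obtain ⟨π, hA⟩ := Set.exists_eq_setOf_eq_of_pairwise_disjoint hdisj hcover
  have hbig : ∀ j, (n / (d + 1) + 1) ^ 2 < #{v | π v = j} := fun j => by
    have h := hsize j
    rw [hA j, Set.ncard_eq_toFinset_card', Set.toFinset_ofPred] at h
    have hr2 : ((n / (d + 1) + 1 : ℕ) : ℝ) ^ 2 ≤ R ^ 2 := by gcongr
    exact_mod_cast hr2.trans_lt (hδR.trans_le h)
  obtain ⟨x₁, y₁, x₂, y₂, hne, hy₁, hy₂, hxy₁, hxy₂, h₁, h₂⟩ :=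
    G.exists_two_disjoint_edges_between_fibers hreg π (by simpa using hbig)
      (by simpa [hcard, mul_comm] using Nat.lt_mul_div_succ n d.succ_pos)
      (by simpa using (Nat.pow_le_pow_left hrR 7).trans (by exact_mod_cast hdR))
  exact ⟨π x₁, π x₂, hne, x₁, by simp [hA], y₁, by simp [hA, hy₁], x₂, by simp [hA],
    y₂, by simp [hA, hy₂], hxy₁, hxy₂, h₁, h₂⟩
end

section
/- Let constants ζ, δ and n satisfy the hierarchy 1/n ≪ ζ ≪ δ (with n sufficiently large in terms of ζ and δ). Let H be a graph on at most n vertices with minimum degree at least (δ/4)·n and with no (ζ/4)-sparse cut, and let x₀, y₀, x★, y★ be four distinct vertices of H. Then there exists a set R ⊆ V(H) \ {x₀, y₀, x★, y★} of size at most (log n)³ such that for every pair of distinct vertices a, b ∈ V(H) \ R (with a and b in different vertex classes if H is bipartite), the induced subgraph H[R] contains at least log n pairwise vertex-disjoint paths, each of length at most 12/ζ, each starting at a neighbour of a and ending at a neighbour of b. Moreover, if H is bipartite with vertex classes X and Y, one can additionally ensure |R ∩ X| = |R ∩ Y|. -/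
open SimpleGraph

/-- `H[R]` contains at least `log n` pairwise vertex-disjoint paths, each of length at
most `12 / ζ`, starting at a neighbour of `a` and ending at a neighbour of `b`. -/
def ManyConnectingPaths {V : Type*} (H : SimpleGraph V) (R : Set V) (ζ : ℝ) (n : ℕ)
    (a b : V) : Prop :=
  ∃ k : ℕ, Real.log n ≤ k ∧
    ∃ (u v : Fin k → V) (p : ∀ i, H.Walk (u i) (v i)),
      (∀ i, (p i).IsPath) ∧
      (∀ i, ∀ w ∈ (p i).support, w ∈ R) ∧
      (∀ i, ((p i).length : ℝ) ≤ 12 / ζ) ∧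
      (∀ i, H.Adj a (u i) ∧ H.Adj b (v i)) ∧
      (∀ i j, i ≠ j → ∀ w, w ∈ (p i).support → w ∉ (p j).support)

set_option linter.unusedSectionVars false

section Reservoir

lemma ncard_prod' {α β : Type*} (A : Set α) (B : Set β) :
    (A ×ˢ B).ncard = A.ncard * B.ncard := by
  rw [← Nat.card_coe_set_eq, ← Nat.card_coe_set_eq, ← Nat.card_coe_set_eq,
    Nat.card_congr (Equiv.Set.prod A B), Nat.card_prod]

lemma ebtw_le_card {V : Type*} [Finite V] (G : SimpleGraph V) (A B : Set V) :
    ebtw G A B ≤ A.ncard * B.ncard := by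
  classical
  cases isEmpty_or_nonempty V with
  | inl h =>
    have : ({e : Sym2 V | e ∈ G.edgeSet ∧ ∃ x ∈ A, ∃ y ∈ B, e = s(x, y)}) = ∅ := by
      ext e; simp only [Set.mem_empty_iff_false, iff_false]; intro he
      exact IsEmpty.false e.out.1
    simp [ebtw, this]
  | inr h =>
    inhabit V
    rw [← ncard_prod']
    have hsel : ∀ e : Sym2 V, ∃ p : V × V,
        e ∈ {e : Sym2 V | e ∈ G.edgeSet ∧ ∃ x ∈ A, ∃ y ∈ B, e = s(x, y)} →
          p ∈ A ×ˢ B ∧ e = s(p.1, p.2) := by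
      intro e
      by_cases he : e ∈ {e : Sym2 V | e ∈ G.edgeSet ∧ ∃ x ∈ A, ∃ y ∈ B, e = s(x, y)}
      · obtain ⟨-, x, hx, y, hy, rfl⟩ := he
        exact ⟨(x, y), fun _ => ⟨⟨hx, hy⟩, rfl⟩⟩
      · exact ⟨(default, default), fun h' => absurd h' he⟩
    choose f hf using hsel
    exact Set.ncard_le_ncard_of_injOn f (fun e he => (hf e he).1)
      (fun e₁ h₁ e₂ h₂ hfe => by rw [(hf e₁ h₁).2, (hf e₂ h₂).2, hfe]) (Set.toFinite _)

lemma ebtw_union_left_le_s19 {V : Type*} [Finite V] (G : SimpleGraph V) (A A' B : Set V) :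
    ebtw G (A ∪ A') B ≤ ebtw G A B + ebtw G A' B := by
  refine le_trans (le_trans (Set.ncard_le_ncard ?_ (Set.toFinite _))
    (Set.ncard_union_le _ _)) le_rfl
  rintro e ⟨he, x, hx, y, hy, rfl⟩
  cases hx with
  | inl h => exact Or.inl ⟨he, x, h, y, hy, rfl⟩
  | inr h => exact Or.inr ⟨he, x, h, y, hy, rfl⟩

lemma ebtw_le_nbr {V : Type*} [Finite V] (G : SimpleGraph V) (B C : Set V) :
    ebtw G B C ≤ B.ncard * {y | y ∈ C ∧ ∃ x ∈ B, G.Adj x y}.ncard := by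
  refine le_trans (Set.ncard_le_ncard ?_ (Set.toFinite _)) (ebtw_le_card G B _)
  rintro e ⟨he, x, hx, y, hy, rfl⟩
  exact ⟨he, x, hx, y, ⟨hy, x, hx, he⟩, rfl⟩

/-- ball of radius `t` around `c` avoiding `Z`. -/
def gball {V : Type*} (H : SimpleGraph V) (Z : Set V) (c : V) (t : ℕ) : Set V :=
  {w | ∃ p : H.Walk c w, p.length ≤ t ∧ ∀ x ∈ p.support, x ∉ Z}

variable {V : Type*} [Fintype V] {H : SimpleGraph V} {Z : Set V}

lemma gball_subset_compl {c : V} {t : ℕ} : gball H Z c t ⊆ Zᶜ := by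
  rintro w ⟨p, -, hp⟩; exact hp w p.end_mem_support

lemma self_mem_gball {c : V} (hc : c ∉ Z) (t : ℕ) : c ∈ gball H Z c t :=
  ⟨Walk.nil, by simp, by simp [Walk.support_nil]; exact hc⟩

lemma gball_mono {c : V} {t t' : ℕ} (h : t ≤ t') : gball H Z c t ⊆ gball H Z c t' := by
  rintro w ⟨p, hl, hp⟩; exact ⟨p, hl.trans h, hp⟩

lemma gball_step {c w w' : V} {t : ℕ} (hw : w ∈ gball H Z c t) (ha : H.Adj w w')
    (hw' : w' ∉ Z) : w' ∈ gball H Z c (t + 1) := by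
  obtain ⟨p, hl, hp⟩ := hw
  refine ⟨p.concat ha, by rw [Walk.length_concat]; omega, ?_⟩
  intro x hx
  rw [Walk.support_concat, List.mem_append] at hx
  rcases hx with hx | hx
  · exact hp x hx
  · simp at hx; subst hx; exact hw'

lemma nbr_subset_gball_one {c : V} (hc : c ∉ Z) :
    {u | H.Adj c u} \ Z ⊆ gball H Z c 1 := by
  rintro u ⟨hu, huZ⟩
  exact gball_step (self_mem_gball hc 0) hu huZ

lemma cut_lt {α : ℝ} (hns : ¬ HasSparseCut H Set.univ α) {X Y : Set V}
    (hXY : X ∪ Y = Set.univ) (hd : Disjoint X Y) (hX : X.Nonempty) (hY : Y.Nonempty) :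
    α * X.ncard * Y.ncard < ebtw H X Y := by
  by_contra h; push_neg at h; exact hns ⟨X, Y, hXY, hd, hX, hY, h⟩

lemma expansion_step {ζ : ℝ} (hζ : 0 < ζ)
    (hns : ¬ HasSparseCut H Set.univ (ζ / 4)) {B : Set V}
    (hBZ : B ⊆ Zᶜ) (hBne : B.Nonempty)
    (hZB : (Z.ncard : ℝ) ≤ ζ / 100 * B.ncard) :
    6 / 25 * ζ * (((B ∪ Z)ᶜ).ncard : ℝ) ≤
      ({y | y ∈ (B ∪ Z)ᶜ ∧ ∃ x ∈ B, H.Adj x y}.ncard : ℝ) := by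
  set C := (B ∪ Z)ᶜ with hC
  rcases C.eq_empty_or_nonempty with h | hCne
  · rw [h]; simp
  have hcut := cut_lt hns (X := B ∪ Z) (Y := C) (Set.union_compl_self _)
    disjoint_compl_right (hBne.mono Set.subset_union_left) hCne
  have h1 : (ebtw H (B ∪ Z) C : ℝ) ≤ ebtw H B C + ebtw H Z C := by
    exact_mod_cast ebtw_union_left_le_s19 H B Z C
  have h2 : (ebtw H B C : ℝ) ≤ B.ncard * {y | y ∈ C ∧ ∃ x ∈ B, H.Adj x y}.ncard := by
    exact_mod_cast ebtw_le_nbr H B C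
  have h3 : (ebtw H Z C : ℝ) ≤ Z.ncard * C.ncard := by exact_mod_cast ebtw_le_card H Z C
  have h4 : (B.ncard : ℝ) ≤ ((B ∪ Z).ncard : ℝ) := by
    exact_mod_cast Set.ncard_le_ncard Set.subset_union_left (Set.toFinite _)
  have hBpos : (0 : ℝ) < B.ncard := by
    exact_mod_cast (Set.ncard_pos (Set.toFinite _)).2 hBne
  have hCpos : (0 : ℝ) ≤ C.ncard := by positivity
  have e1 : ζ / 4 * B.ncard * C.ncard ≤ ζ / 4 * (B ∪ Z).ncard * C.ncard := by
    have := mul_le_mul_of_nonneg_left h4 (le_of_lt (by positivity : (0:ℝ) < ζ / 4))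
    exact mul_le_mul_of_nonneg_right this hCpos
  have e2 : (Z.ncard : ℝ) * C.ncard ≤ ζ / 100 * B.ncard * C.ncard :=
    mul_le_mul_of_nonneg_right hZB hCpos
  have key : (B.ncard : ℝ) * (6 / 25 * ζ * C.ncard) <
      B.ncard * {y | y ∈ C ∧ ∃ x ∈ B, H.Adj x y}.ncard := by
    nlinarith [hcut, h1, h2, h3, e1, e2]
  exact le_of_lt ((mul_lt_mul_iff_right₀ hBpos).mp key)

lemma compl_union_eq {B : Set V} : (B ∪ Z)ᶜ = Zᶜ \ B := by
  rw [Set.compl_union, Set.diff_eq, Set.inter_comm]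

lemma gball_iter {ζ μ : ℝ} (hζ : 0 < ζ) (hζ1 : ζ ≤ 1)
    (hns : ¬ HasSparseCut H Set.univ (ζ / 4)) {c : V} (hc : c ∉ Z)
    (hZ2 : (Z.ncard : ℝ) ≤ ζ / 100 * μ)
    (hball1 : μ ≤ ((gball H Z c 1).ncard : ℝ)) (hμ : 0 ≤ μ) :
    ∀ t : ℕ, ((((gball H Z c (1 + t)) ∪ Z)ᶜ).ncard : ℝ) ≤
      (1 - 6 / 25 * ζ) ^ t * ((((gball H Z c 1) ∪ Z)ᶜ).ncard : ℝ) := by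
  intro t
  induction t with
  | zero => simp
  | succ t ih =>
    set B := gball H Z c (1 + t) with hB
    have hBne : B.Nonempty := ⟨c, self_mem_gball hc _⟩
    have hBcard : μ ≤ (B.ncard : ℝ) := by
      refine hball1.trans ?_
      have h' : (gball H Z c 1).ncard ≤ (gball H Z c (1 + t)).ncard :=
        Set.ncard_le_ncard (gball_mono (by omega)) (Set.toFinite _)
      exact_mod_cast h'
    have hZB : (Z.ncard : ℝ) ≤ ζ / 100 * B.ncard := by
      refine hZ2.trans ?_
      have : (0:ℝ) < ζ / 100 := by positivity
      nlinarith
    have hexp := expansion_step hζ hns (Z := Z) gball_subset_compl hBne hZB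
    set Nb := {y | y ∈ (B ∪ Z)ᶜ ∧ ∃ x ∈ B, H.Adj x y} with hNb
    have hNbB : Nb ⊆ gball H Z c (1 + (t + 1)) := by
      rintro y ⟨hy, x, hx, hxy⟩
      have : y ∉ Z := fun h => hy (Or.inr h)
      have := gball_step hx hxy this
      exact gball_mono (by omega) this
    have hsub : ((gball H Z c (1 + (t+1))) ∪ Z)ᶜ ⊆ ((B ∪ Z)ᶜ) \ Nb := by
      intro y hy
      simp only [Set.mem_compl_iff, Set.mem_union, not_or] at hy
      constructor
      · simp only [Set.mem_compl_iff, Set.mem_union, not_or]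
        exact ⟨fun h => hy.1 (gball_mono (by omega) h), hy.2⟩
      · exact fun h => hy.1 (hNbB h)
    have hNbsub : Nb ⊆ (B ∪ Z)ᶜ := fun y hy => hy.1
    have step1 : (((gball H Z c (1 + (t+1))) ∪ Z)ᶜ).ncard ≤ ((B ∪ Z)ᶜ).ncard - Nb.ncard := by
      rw [← Set.ncard_diff hNbsub (Set.toFinite _)]
      exact Set.ncard_le_ncard hsub (Set.toFinite _)
    have hNble : (Nb.ncard : ℝ) ≤ ((B ∪ Z)ᶜ).ncard := by
      exact_mod_cast Set.ncard_le_ncard hNbsub (Set.toFinite _)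
    have step1R : ((((gball H Z c (1 + (t+1))) ∪ Z)ᶜ).ncard : ℝ) ≤
        (((B ∪ Z)ᶜ).ncard : ℝ) - Nb.ncard := by
      have := step1
      have h' : Nb.ncard ≤ ((B ∪ Z)ᶜ).ncard := by exact_mod_cast hNble
      push_cast [Nat.cast_sub h'] at *
      exact_mod_cast this
    have hfac : (0:ℝ) ≤ 1 - 6 / 25 * ζ := by nlinarith
    calc ((((gball H Z c (1 + (t+1))) ∪ Z)ᶜ).ncard : ℝ)
        ≤ (((B ∪ Z)ᶜ).ncard : ℝ) - Nb.ncard := step1R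
      _ ≤ (1 - 6/25*ζ) * (((B ∪ Z)ᶜ).ncard : ℝ) := by nlinarith [hexp]
      _ ≤ (1 - 6/25*ζ) * ((1 - 6/25*ζ) ^ t * ((((gball H Z c 1) ∪ Z)ᶜ).ncard : ℝ)) := by
          exact mul_le_mul_of_nonneg_left ih hfac
      _ = (1 - 6/25*ζ) ^ (t+1) * ((((gball H Z c 1) ∪ Z)ᶜ).ncard : ℝ) := by ring


lemma two_lt_exp_seven_tenths : (2:ℝ) < Real.exp (7/10) := by
  by_contra h
  push_neg at h
  have h0 : (0:ℝ) ≤ Real.exp (7/10) := (Real.exp_pos _).le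
  have h1 : Real.exp (7/10) ^ 10 ≤ 2 ^ 10 := pow_le_pow_left₀ h0 h 10
  have h2 : Real.exp (7/10) ^ 10 = Real.exp 7 := by
    rw [← Real.exp_nat_mul]; norm_num
  have h3 : Real.exp 7 = Real.exp 1 ^ 7 := by
    rw [← Real.exp_nat_mul]; norm_num
  have h4 := Real.exp_one_gt_d9
  nlinarith [pow_lt_pow_left₀ h4 (by norm_num : (0:ℝ) ≤ 2.7182818283) (by norm_num : 7 ≠ 0)]

lemma pow_one_sub_le_exp {x : ℝ} (hx0 : 0 ≤ x) (hx1 : x ≤ 1) (t : ℕ) :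
    (1 - x) ^ t ≤ Real.exp (-(x * t)) := by
  have h1 : (1 - x) ≤ Real.exp (-x) := by
    have := Real.add_one_le_exp (-x); linarith
  calc (1 - x) ^ t ≤ Real.exp (-x) ^ t := pow_le_pow_left₀ (by linarith) h1 t
    _ = Real.exp (-(x * t)) := by rw [← Real.exp_nat_mul]; ring_nf

lemma ball_one_large {δ : ℝ} {n : ℕ} (hδ : 0 < δ)
    (hdeg : ∀ v : V, δ / 4 * n ≤ ({u | H.Adj v u}.ncard : ℝ))
    (hZsmall : (Z.ncard : ℝ) ≤ δ / 8 * n) {c : V} (hc : c ∉ Z) :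
    δ / 8 * n ≤ ((gball H Z c 1).ncard : ℝ) := by
  have h1 : ({u | H.Adj c u} \ Z).ncard + Z.ncard ≥ {u | H.Adj c u}.ncard := by
    refine le_trans (Set.ncard_le_ncard ?_ (Set.toFinite _)) (Set.ncard_union_le _ _)
    intro x hx
    by_cases h : x ∈ Z
    · exact Or.inr h
    · exact Or.inl ⟨hx, h⟩
  have h2 : (({u | H.Adj c u} \ Z).ncard : ℝ) ≥ δ / 4 * n - δ / 8 * n := by
    have := hdeg c
    have h1' : (({u | H.Adj c u} \ Z).ncard : ℝ) + Z.ncard ≥ {u | H.Adj c u}.ncard := by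
      exact_mod_cast h1
    linarith
  have h3 : (({u | H.Adj c u} \ Z).ncard : ℝ) ≤ ((gball H Z c 1).ncard : ℝ) := by
    exact_mod_cast Set.ncard_le_ncard (nbr_subset_gball_one hc) (Set.toFinite _)
  linarith

lemma connect_lemma {ζ δ : ℝ} {n : ℕ} (hζ : 0 < ζ) (hζ1 : ζ ≤ 1) (hδ : 0 < δ)
    (hn : 0 < n) (hns : ¬ HasSparseCut H Set.univ (ζ / 4))
    (hdeg : ∀ v : V, δ / 4 * n ≤ ({u | H.Adj v u}.ncard : ℝ))
    (hZ : (Z.ncard : ℝ) ≤ ζ / 100 * (δ / 8 * n))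
    {T : ℕ} (hT : 7/10 ≤ 6/25 * ζ * T)
    {c₁ c₂ : V} (h1 : c₁ ∉ Z) (h2 : c₂ ∉ Z) :
    ∃ p : H.Walk c₁ c₂, p.length ≤ 2 * (1 + T) ∧ ∀ x ∈ p.support, x ∉ Z := by
  have hδn : (0:ℝ) < δ / 8 * n := by positivity
  have hZsmall : (Z.ncard : ℝ) ≤ δ / 8 * n := by nlinarith
  -- complement bound for each center
  have key : ∀ c : V, c ∉ Z →
      (((gball H Z c (1 + T) ∪ Z)ᶜ).ncard : ℝ) ≤
        Real.exp (-(7/10)) * (((Zᶜ).ncard : ℝ) - δ / 8 * n) := by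
    intro c hc
    have hb1 := ball_one_large hδ hdeg hZsmall hc
    have hiter := gball_iter hζ hζ1 hns hc hZ hb1 hδn.le T
    have hpow : (1 - 6/25*ζ) ^ T ≤ Real.exp (-(7/10)) := by
      refine le_trans (pow_one_sub_le_exp (by positivity) (by nlinarith) T) ?_
      exact Real.exp_le_exp.2 (by linarith)
    have hC1 : ((((gball H Z c 1) ∪ Z)ᶜ).ncard : ℝ) ≤ ((Zᶜ).ncard : ℝ) - δ / 8 * n := by
      rw [compl_union_eq]
      have hsub : gball H Z c 1 ⊆ Zᶜ := gball_subset_compl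
      have hd := Set.ncard_diff hsub (Set.toFinite _)
      have hle : (gball H Z c 1).ncard ≤ (Zᶜ).ncard :=
        Set.ncard_le_ncard hsub (Set.toFinite _)
      have : ((Zᶜ \ gball H Z c 1).ncard : ℝ) = ((Zᶜ).ncard : ℝ) - (gball H Z c 1).ncard := by
        rw [hd, Nat.cast_sub hle]
      rw [this]; linarith
    have hC1nn : (0:ℝ) ≤ (((gball H Z c 1) ∪ Z)ᶜ).ncard := by positivity
    have hq : (0:ℝ) < Real.exp (-(7/10)) := Real.exp_pos _
    calc (((gball H Z c (1 + T) ∪ Z)ᶜ).ncard : ℝ)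
        ≤ (1 - 6/25*ζ) ^ T * ((((gball H Z c 1) ∪ Z)ᶜ).ncard : ℝ) := hiter
      _ ≤ Real.exp (-(7/10)) * ((((gball H Z c 1) ∪ Z)ᶜ).ncard : ℝ) :=
          mul_le_mul_of_nonneg_right hpow hC1nn
      _ ≤ Real.exp (-(7/10)) * (((Zᶜ).ncard : ℝ) - δ / 8 * n) :=
          mul_le_mul_of_nonneg_left hC1 hq.le
  -- ball sizes
  set B₁ := gball H Z c₁ (1 + T) with hB₁
  set B₂ := gball H Z c₂ (1 + T) with hB₂
  have hcard : ∀ c : V, c ∉ Z → ((gball H Z c (1+T)).ncard : ℝ) =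
      ((Zᶜ).ncard : ℝ) - (((gball H Z c (1 + T) ∪ Z)ᶜ).ncard : ℝ) := by
    intro c hc
    rw [compl_union_eq]
    have hsub : gball H Z c (1+T) ⊆ Zᶜ := gball_subset_compl
    have hd := Set.ncard_diff hsub (Set.toFinite _)
    have hle : (gball H Z c (1+T)).ncard ≤ (Zᶜ).ncard :=
      Set.ncard_le_ncard hsub (Set.toFinite _)
    have : ((Zᶜ \ gball H Z c (1+T)).ncard : ℝ) = ((Zᶜ).ncard : ℝ) - (gball H Z c (1+T)).ncard := by
      rw [hd, Nat.cast_sub hle]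
    rw [this]; ring
  -- intersection is nonempty
  have hunion : ((B₁ ∪ B₂).ncard : ℝ) ≤ ((Zᶜ).ncard : ℝ) := by
    have h' : (B₁ ∪ B₂).ncard ≤ (Zᶜ).ncard :=
      Set.ncard_le_ncard (Set.union_subset gball_subset_compl gball_subset_compl)
        (Set.toFinite _)
    exact_mod_cast h'
  have hiu : ((B₁ ∩ B₂).ncard : ℝ) + ((B₁ ∪ B₂).ncard : ℝ) = (B₁.ncard : ℝ) + B₂.ncard := by
    exact_mod_cast Set.ncard_inter_add_ncard_union B₁ B₂ (Set.toFinite _) (Set.toFinite _)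
  have hq2 : 2 * Real.exp (-(7/10)) < 1 := by
    have h := two_lt_exp_seven_tenths
    have : Real.exp (-(7/10)) = (Real.exp (7/10))⁻¹ := by
      rw [← Real.exp_neg]
    rw [this]
    rw [mul_inv_lt_iff₀' (by positivity)]
    linarith
  have hmge : δ / 8 * n ≤ ((Zᶜ).ncard : ℝ) := by
    have : δ / 8 * n ≤ ((gball H Z c₁ 1).ncard : ℝ) := ball_one_large hδ hdeg hZsmall h1
    have h3 : ((gball H Z c₁ 1).ncard : ℝ) ≤ ((Zᶜ).ncard : ℝ) := by
      have h' : (gball H Z c₁ 1).ncard ≤ (Zᶜ).ncard :=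
        Set.ncard_le_ncard (gball_subset_compl (H := H) (Z := Z) (c := c₁) (t := 1))
          (Set.toFinite _)
      exact_mod_cast h'
    linarith
  have hpos : (0:ℝ) < ((B₁ ∩ B₂).ncard : ℝ) := by
    have k1 := key c₁ h1
    have k2 := key c₂ h2
    have e1 := hcard c₁ h1
    have e2 := hcard c₂ h2
    rw [← hB₁] at e1 k1
    rw [← hB₂] at e2 k2
    have hqpos : (0:ℝ) < Real.exp (-(7/10)) := Real.exp_pos _
    nlinarith
  have hne : (B₁ ∩ B₂).Nonempty := by
    rw [← Set.ncard_pos (Set.toFinite _)]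
    exact_mod_cast hpos
  obtain ⟨w, hw₁, hw₂⟩ := hne
  obtain ⟨p₁, hl₁, hs₁⟩ := hw₁
  obtain ⟨p₂, hl₂, hs₂⟩ := hw₂
  refine ⟨p₁.append p₂.reverse, ?_, ?_⟩
  · rw [Walk.length_append, Walk.length_reverse]; omega
  · intro x hx
    rw [Walk.mem_support_append_iff] at hx
    rcases hx with hx | hx
    · exact hs₁ x hx
    · rw [Walk.support_reverse, List.mem_reverse] at hx
      exact hs₂ x hx


section Dom
variable {V : Type*} [Fintype V] {H : SimpleGraph V} [DecidableRel H.Adj] {Z : Set V}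

lemma card_V_large {δ : ℝ} {n : ℕ}
    (hdeg : ∀ v : V, δ / 4 * n ≤ ({u | H.Adj v u}.ncard : ℝ)) (v₀ : V) :
    δ / 4 * n + 1 ≤ (Fintype.card V : ℝ) := by
  have h := hdeg v₀
  have hsub : {u | H.Adj v₀ u} ⊆ Set.univ \ {v₀} := by
    intro u hu
    exact ⟨trivial, fun h' => H.irrefl (by rwa [Set.mem_singleton_iff.mp h'] at hu)⟩
  have h2 : ({u | H.Adj v₀ u}).ncard ≤ (Set.univ \ {v₀} : Set V).ncard :=
    Set.ncard_le_ncard hsub (Set.toFinite _)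
  have h3 : (Set.univ \ {v₀} : Set V).ncard = Fintype.card V - 1 := by
    rw [Set.ncard_diff (by simp) (Set.toFinite _)]
    simp [Set.ncard_univ, Nat.card_eq_fintype_card]
  have h4 : 1 ≤ Fintype.card V := Fintype.card_pos_iff.mpr ⟨v₀⟩
  have h5 : (({u | H.Adj v₀ u}).ncard : ℝ) ≤ (Fintype.card V : ℝ) - 1 := by
    rw [h3] at h2
    have := (Nat.cast_le (α := ℝ)).2 h2
    rw [Nat.cast_sub h4] at this
    push_cast at this ⊢
    linarith
  linarith

lemma nbr_diff_large {δ : ℝ} {n : ℕ}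
    (hdeg : ∀ v : V, δ / 4 * n ≤ ({u | H.Adj v u}.ncard : ℝ))
    (hZsmall : (Z.ncard : ℝ) ≤ δ / 8 * n) (c : V) :
    δ / 8 * n ≤ ((({u | H.Adj c u}) \ Z).ncard : ℝ) := by
  have h1 : ({u | H.Adj c u} \ Z).ncard + Z.ncard ≥ {u | H.Adj c u}.ncard := by
    refine le_trans (Set.ncard_le_ncard ?_ (Set.toFinite _)) (Set.ncard_union_le _ _)
    intro x hx
    by_cases h : x ∈ Z
    · exact Or.inr h
    · exact Or.inl ⟨hx, h⟩
  have := hdeg c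
  have h1' : ((({u | H.Adj c u}) \ Z).ncard : ℝ) + Z.ncard ≥ {u | H.Adj c u}.ncard := by
    exact_mod_cast h1
  linarith

lemma exists_dominator {δ : ℝ} {n : ℕ} (hδ : 0 < δ) (hn : Fintype.card V ≤ n)
    (hdeg : ∀ v : V, δ / 4 * n ≤ ({u | H.Adj v u}.ncard : ℝ))
    (hZsmall : (Z.ncard : ℝ) ≤ δ / 8 * n) (U : Finset V) (hU : U.Nonempty) :
    ∃ w : V, w ∉ Z ∧
      δ / 8 * U.card ≤ ((U.filter (fun v => H.Adj v w)).card : ℝ) := by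
  classical
  set Zc : Finset V := Finset.univ.filter (· ∈ Zᶜ) with hZc
  have hZcard : (Zᶜ).ncard = Zc.card := by
    rw [← Set.ncard_coe_finset]; congr 1; ext x; simp [hZc]
  have hcompl : Z.ncard + (Zᶜ).ncard = Fintype.card V := by
    rw [Set.ncard_add_ncard_compl Z (Set.toFinite _) (Set.toFinite _),
      Nat.card_eq_fintype_card]
  obtain ⟨v₀, -⟩ := hU
  have hV := card_V_large hdeg v₀
  have hZcn : δ / 8 * n + 1 ≤ (Zc.card : ℝ) := by
    have : (Z.ncard : ℝ) + (Zc.card : ℝ) = Fintype.card V := by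
      rw [← hZcard]; exact_mod_cast hcompl
    linarith
  have hZcne : Zc.Nonempty := by
    rw [← Finset.card_pos]
    have h0 : (0:ℝ) < Zc.card := by nlinarith [(by positivity : (0:ℝ) ≤ δ/8 * (n:ℝ))]
    exact_mod_cast h0
  -- double counting
  have hkey : ∑ w ∈ Zc, ((U.filter (fun v => H.Adj v w)).card : ℝ) =
      ∑ v ∈ U, ((Zc.filter (fun w => H.Adj v w)).card : ℝ) := by
    push_cast [Finset.card_filter]
    exact Finset.sum_comm
  have heach : ∀ v ∈ U, δ / 8 * n ≤ ((Zc.filter (fun w => H.Adj v w)).card : ℝ) := by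
    intro v _
    have h1 := nbr_diff_large hdeg hZsmall v
    have h2 : (({u | H.Adj v u}) \ Z).ncard = (Zc.filter (fun w => H.Adj v w)).card := by
      rw [← Set.ncard_coe_finset]; congr 1; ext x
      simp [hZc, Set.mem_diff, and_comm]
    rw [h2] at h1; exact h1
  have hsum2 : (U.card : ℝ) * (δ / 8 * n) ≤ ∑ v ∈ U, ((Zc.filter (fun w => H.Adj v w)).card : ℝ) := by
    calc (U.card : ℝ) * (δ / 8 * n) = ∑ _v ∈ U, δ / 8 * n := by
          rw [Finset.sum_const, nsmul_eq_mul]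
      _ ≤ _ := Finset.sum_le_sum heach
  have hsum1 : ∑ _w ∈ Zc, δ / 8 * (U.card : ℝ) ≤
      ∑ w ∈ Zc, ((U.filter (fun v => H.Adj v w)).card : ℝ) := by
    rw [hkey, Finset.sum_const, nsmul_eq_mul]
    have hZcn' : (Zc.card : ℝ) ≤ n := by
      have : Zc.card ≤ Fintype.card V := Finset.card_le_univ _
      have h2 : (Zc.card:ℝ) ≤ Fintype.card V := by exact_mod_cast this
      have h3 : (Fintype.card V : ℝ) ≤ n := by exact_mod_cast hn
      linarith
    have hU0 : (0:ℝ) ≤ δ / 8 * U.card := by positivity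
    nlinarith [mul_le_mul_of_nonneg_right hZcn' hU0, hsum2]
  obtain ⟨w, hwZc, hw⟩ := Finset.exists_le_of_sum_le hZcne hsum1
  refine ⟨w, ?_, hw⟩
  have : w ∈ Zᶜ := by simpa [hZc] using hwZc
  exact this

lemma greedy_dom {δ : ℝ} {n : ℕ} (hδ : 0 < δ) (hδ8 : δ / 8 < 1) (hn : Fintype.card V ≤ n)
    (hdeg : ∀ v : V, δ / 4 * n ≤ ({u | H.Adj v u}.ncard : ℝ))
    (hZsmall : (Z.ncard : ℝ) ≤ δ / 8 * n) :
    ∀ (j : ℕ) (U : Finset V), (U.card : ℝ) * (1 - δ/8) ^ j < 1 →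
      ∃ T : Finset V, (↑T : Set V) ⊆ Zᶜ ∧ T.card ≤ j ∧ ∀ v ∈ U, ∃ u ∈ T, H.Adj v u := by
  classical
  intro j
  induction j with
  | zero =>
    intro U hU
    simp only [pow_zero, mul_one] at hU
    have : U.card = 0 := by exact_mod_cast Nat.lt_one_iff.mp (by exact_mod_cast hU)
    refine ⟨∅, by simp, by simp, ?_⟩
    intro v hv
    rw [Finset.card_eq_zero.mp this] at hv
    simp at hv
  | succ j ih =>
    intro U hU
    rcases U.eq_empty_or_nonempty with rfl | hUne
    · exact ⟨∅, by simp, by simp, by simp⟩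
    obtain ⟨w, hwZ, hw⟩ := exists_dominator hδ hn hdeg hZsmall U hUne
    set U' := U.filter (fun v => ¬ H.Adj v w) with hU'
    have hcard : U'.card + (U.filter (fun v => H.Adj v w)).card = U.card := by
      rw [hU', add_comm]
      exact Finset.card_filter_add_card_filter_not _
    have hU'le : (U'.card : ℝ) ≤ (1 - δ/8) * U.card := by
      have : (U'.card : ℝ) = U.card - (U.filter (fun v => H.Adj v w)).card := by
        have := hcard; push_cast [← this]; ring
      rw [this]; nlinarith [hw]
    have hpow : (0:ℝ) ≤ (1 - δ/8) ^ j := pow_nonneg (by linarith) j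
    have hU'2 : (U'.card : ℝ) * (1 - δ/8) ^ j < 1 := by
      calc (U'.card : ℝ) * (1 - δ/8) ^ j ≤ ((1 - δ/8) * U.card) * (1 - δ/8) ^ j :=
            mul_le_mul_of_nonneg_right hU'le hpow
        _ = (U.card : ℝ) * (1 - δ/8) ^ (j+1) := by ring
        _ < 1 := hU
    obtain ⟨T', hT'Z, hT'c, hT'dom⟩ := ih U' hU'2
    refine ⟨insert w T', ?_, ?_, ?_⟩
    · intro x hx
      rcases Finset.mem_insert.mp (by exact_mod_cast hx) with rfl | hx'
      · exact hwZ
      · exact hT'Z (by exact_mod_cast hx')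
    · exact (Finset.card_insert_le _ _).trans (by omega)
    · intro v hv
      by_cases h : H.Adj v w
      · exact ⟨w, Finset.mem_insert_self _ _, h⟩
      · obtain ⟨u, hu, hadj⟩ := hT'dom v (Finset.mem_filter.mpr ⟨hv, h⟩)
        exact ⟨u, Finset.mem_insert_of_mem hu, hadj⟩



lemma dominating_set {δ : ℝ} {n : ℕ} (hδ : 0 < δ) (hδ8 : δ / 8 < 1) (hn1 : 1 ≤ n)
    (hn : Fintype.card V ≤ n)
    (hdeg : ∀ v : V, δ / 4 * n ≤ ({u | H.Adj v u}.ncard : ℝ))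
    (hZsmall : (Z.ncard : ℝ) ≤ δ / 8 * n) :
    ∃ T : Finset V, (↑T : Set V) ⊆ Zᶜ ∧ ((T.card : ℝ) ≤ 8/δ * Real.log n + 2) ∧
      ∀ v : V, ∃ u ∈ T, H.Adj v u := by
  have hlog : 0 ≤ Real.log n := Real.log_natCast_nonneg n
  have harg : 0 ≤ 8/δ * Real.log n := by positivity
  set J := ⌈8/δ * Real.log n⌉₊ + 1 with hJdef
  have hJ1 : 8/δ * Real.log n + 1 ≤ (J:ℝ) := by
    have := Nat.le_ceil (8/δ * Real.log n)
    push_cast [hJdef]; linarith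
  have hJ2 : (J:ℝ) ≤ 8/δ * Real.log n + 2 := by
    have := Nat.ceil_lt_add_one harg
    push_cast [hJdef]; linarith
  have hnpos : (0:ℝ) < n := by exact_mod_cast hn1
  have hJbound : (n:ℝ) * (1 - δ/8) ^ J < 1 := by
    have hp := pow_one_sub_le_exp (le_of_lt (by linarith : (0:ℝ) < δ/8)) (by linarith) J
    have hlt : Real.log n < δ/8 * J := by
      have : δ/8 * (J:ℝ) ≥ δ/8 * (8/δ * Real.log n + 1) :=
        mul_le_mul_of_nonneg_left hJ1 (by linarith)
      have heq : δ/8 * (8/δ * Real.log n) = Real.log n := by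
        field_simp
      nlinarith
    have : (n:ℝ) * (1 - δ/8) ^ J ≤ n * Real.exp (-(δ/8 * J)) :=
      mul_le_mul_of_nonneg_left hp (by positivity)
    have h2 : (n:ℝ) * Real.exp (-(δ/8 * J)) < 1 := by
      rw [← Real.exp_log hnpos, ← Real.exp_add]
      have : Real.log n + -(δ/8 * J) < 0 := by linarith
      calc Real.exp (Real.log ↑n + -(δ / 8 * ↑J)) < Real.exp 0 := Real.exp_lt_exp.2 this
        _ = 1 := Real.exp_zero
    linarith
  have hcards : ((Finset.univ : Finset V).card : ℝ) * (1 - δ/8) ^ J < 1 := by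
    have h1 : ((Finset.univ : Finset V).card : ℝ) ≤ n := by
      simp only [Finset.card_univ]; exact_mod_cast hn
    have hp : (0:ℝ) ≤ (1 - δ/8) ^ J := pow_nonneg (by linarith) J
    nlinarith
  obtain ⟨T, hTZ, hTc, hTdom⟩ := greedy_dom hδ hδ8 hn hdeg hZsmall J Finset.univ hcards
  refine ⟨T, hTZ, ?_, fun v => hTdom v (Finset.mem_univ v)⟩
  have : (T.card : ℝ) ≤ J := by exact_mod_cast hTc
  linarith

lemma web_lemma {ζ δ : ℝ} {n : ℕ} (hζ : 0 < ζ) (hζ24 : ζ ≤ 1/24) (hδ : 0 < δ)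
    (hδ8 : δ / 8 < 1) (hn1 : 1 ≤ n) (hn : Fintype.card V ≤ n)
    (hns : ¬ HasSparseCut H Set.univ (ζ / 4))
    (hdeg : ∀ v : V, δ / 4 * n ≤ ({u | H.Adj v u}.ncard : ℝ))
    (hZ : (Z.ncard : ℝ) ≤ ζ / 100 * (δ / 8 * n)) :
    ∃ S : Set V, S ⊆ Zᶜ ∧
      ((S.ncard : ℝ) ≤ (8/δ * Real.log n + 2) * (12 / ζ + 1)) ∧
      ∀ a b : V, ∃ (u v : V) (p : H.Walk u v), H.Adj a u ∧ H.Adj b v ∧ p.IsPath ∧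
        ((p.length : ℝ) ≤ 12 / ζ) ∧ ∀ x ∈ p.support, x ∈ S := by
  classical
  have hδn : (0:ℝ) < δ / 8 * n := by
    have : (0:ℝ) < n := by exact_mod_cast hn1
    positivity
  have hZsmall : (Z.ncard : ℝ) ≤ δ / 8 * n := by nlinarith
  obtain ⟨T, hTZ, hTc, hTdom⟩ := dominating_set hδ hδ8 hn1 hn hdeg hZsmall
  cases isEmpty_or_nonempty V with
  | inl hV =>
    refine ⟨∅, by simp, ?_, fun a => (IsEmpty.false a).elim⟩
    rw [Set.ncard_empty]
    push_cast
    positivity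
  | inr hV =>
    obtain ⟨t₀, ht₀T, -⟩ := hTdom (Classical.arbitrary V)
    set Tr : ℕ := ⌈35 / (12 * ζ)⌉₊ with hTr
    have hTrge : 35 / (12 * ζ) ≤ (Tr : ℝ) := Nat.le_ceil _
    have hTrle : (Tr : ℝ) ≤ 35 / (12 * ζ) + 1 := le_of_lt (Nat.ceil_lt_add_one (by positivity))
    have h710 : 7/10 ≤ 6/25 * ζ * Tr := by
      have h1 : 6/25 * ζ * (35 / (12*ζ)) = 7/10 := by field_simp; ring
      have h2 : 6/25 * ζ * (35 / (12*ζ)) ≤ 6/25 * ζ * Tr :=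
        mul_le_mul_of_nonneg_left hTrge (by positivity)
      linarith
    have hwalk : ∀ t : V, t ∈ T → ∃ p : H.Walk t t₀,
        p.length ≤ 2 * (1 + Tr) ∧ ∀ x ∈ p.support, x ∉ Z := by
      intro t htT
      exact connect_lemma hζ (by linarith) hδ (by omega) hns hdeg hZ h710
        (fun h => hTZ htT h) (fun h => hTZ ht₀T h)
    choose pfun hplen hpsupp using hwalk
    set S : Set V := ⋃ (t : {x // x ∈ T}), {x | x ∈ (pfun t.1 t.2).support} with hS
    have hSsub : S ⊆ Zᶜ := by
      rintro x hx
      simp only [hS, Set.mem_iUnion] at hx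
      obtain ⟨t, hxt⟩ := hx
      exact hpsupp t.1 t.2 x hxt
    have hmemS : ∀ (t : V) (ht : t ∈ T) (x : V), x ∈ (pfun t ht).support → x ∈ S := by
      intro t ht x hx
      simp only [hS, Set.mem_iUnion]
      exact ⟨⟨t, ht⟩, hx⟩
    have hScard : (S.ncard : ℝ) ≤ (8/δ * Real.log n + 2) * (12 / ζ + 1) := by
      have hfin : S = ↑(T.attach.biUnion (fun t => (pfun t.1 t.2).support.toFinset)) := by
        ext x
        simp only [hS, Set.mem_iUnion, Finset.coe_biUnion, Set.mem_iUnion, Finset.mem_coe,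
          List.mem_toFinset, Finset.mem_attach, Set.mem_setOf_eq, true_and]
        constructor
        · rintro ⟨t, h⟩; exact ⟨t, trivial, h⟩
        · rintro ⟨t, -, h⟩; exact ⟨t, h⟩
      have hcb : (T.attach.biUnion (fun t => (pfun t.1 t.2).support.toFinset)).card ≤
          T.card * (2 * (1 + Tr) + 1) := by
        refine (Finset.card_biUnion_le).trans ?_
        calc ∑ t ∈ T.attach, ((pfun t.1 t.2).support.toFinset).card
            ≤ ∑ t ∈ T.attach, (2 * (1 + Tr) + 1) := by
              refine Finset.sum_le_sum fun t _ => ?_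
              refine (List.toFinset_card_le _).trans ?_
              rw [Walk.length_support]
              have := hplen t.1 t.2
              omega
          _ = T.card * (2 * (1 + Tr) + 1) := by
              rw [Finset.sum_const, Finset.card_attach, smul_eq_mul]
      rw [hfin, Set.ncard_coe_finset]
      have hlen : ((2 * (1 + Tr) + 1 : ℕ) : ℝ) ≤ 12 / ζ + 1 := by
        push_cast
        have h8 : (8:ℝ) ≤ 1/3 * (1/ζ) := by
          rw [mul_one_div, le_div_iff₀ hζ]; linarith
        have hA : 35 / (12*ζ) = 35/12 * (1/ζ) := by ring
        have hB : 12 / ζ = 12 * (1/ζ) := by ring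
        rw [hB]
        rw [hA] at hTrle
        linarith
      have hTc0 : (0:ℝ) ≤ (T.card : ℝ) := by positivity
      calc ((T.attach.biUnion (fun t => (pfun t.1 t.2).support.toFinset)).card : ℝ)
          ≤ (T.card : ℝ) * ((2 * (1 + Tr) + 1 : ℕ) : ℝ) := by exact_mod_cast hcb
        _ ≤ (8/δ * Real.log n + 2) * (12 / ζ + 1) := by
            have h1 : (0:ℝ) ≤ ((2 * (1 + Tr) + 1 : ℕ) : ℝ) := by positivity
            nlinarith [mul_le_mul hTc (le_refl ((2 * (1 + Tr) + 1 : ℕ) : ℝ)) h1 (by positivity)]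
    refine ⟨S, hSsub, hScard, ?_⟩
    intro a b
    obtain ⟨u, huT, hau⟩ := hTdom a
    obtain ⟨v, hvT, hbv⟩ := hTdom b
    set w : H.Walk u v := (pfun u huT).append (pfun v hvT).reverse with hw
    have hwlen : (w.length : ℝ) ≤ 12 / ζ := by
      rw [hw, Walk.length_append, Walk.length_reverse]
      have h1 := hplen u huT
      have h2 := hplen v hvT
      have : ((pfun u huT).length + (pfun v hvT).length : ℝ) ≤ 2*(2 * (1 + Tr)) := by
        push_cast
        have c1 : ((pfun u huT).length : ℝ) ≤ 2 * (1+Tr) := by exact_mod_cast h1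
        have c2 : ((pfun v hvT).length : ℝ) ≤ 2 * (1+Tr) := by exact_mod_cast h2
        linarith
      push_cast
      push_cast at this
      have h8 : (8:ℝ) ≤ 1/3 * (1/ζ) := by
        rw [mul_one_div, le_div_iff₀ hζ]; linarith
      have hA : 35 / (12*ζ) = 35/12 * (1/ζ) := by ring
      have hB : 12 / ζ = 12 * (1/ζ) := by ring
      rw [hB]
      rw [hA] at hTrle
      linarith
    have hwsupp : ∀ x ∈ w.support, x ∈ S := by
      intro x hx
      rw [hw, Walk.mem_support_append_iff] at hx
      rcases hx with hx | hx
      · exact hmemS u huT x hx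
      · rw [Walk.support_reverse, List.mem_reverse] at hx
        exact hmemS v hvT x hx
    refine ⟨u, v, w.bypass, hau, hbv, Walk.bypass_isPath w, ?_, ?_⟩
    · have := Walk.length_bypass_le w
      have : (w.bypass.length : ℝ) ≤ w.length := by exact_mod_cast this
      linarith
    · exact fun x hx => hwsupp x (Walk.support_bypass_subset w hx)


lemma webs_iter {ζ δ : ℝ} {n : ℕ} (hζ : 0 < ζ) (hζ24 : ζ ≤ 1/24) (hδ : 0 < δ)
    (hδ8 : δ / 8 < 1) (hn1 : 1 ≤ n) (hn : Fintype.card V ≤ n)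
    (hns : ¬ HasSparseCut H Set.univ (ζ / 4))
    (hdeg : ∀ v : V, δ / 4 * n ≤ ({u | H.Adj v u}.ncard : ℝ))
    (W : Set V) :
    ∀ k : ℕ,
    ((W.ncard : ℝ) + k * ((8/δ * Real.log n + 2) * (12 / ζ + 1)) ≤ ζ / 100 * (δ / 8 * n)) →
    ∃ S : Fin k → Set V,
      (∀ i, S i ⊆ Wᶜ) ∧
      (∀ i j, i ≠ j → Disjoint (S i) (S j)) ∧
      (((W ∪ ⋃ i, S i).ncard : ℝ) ≤
        W.ncard + k * ((8/δ * Real.log n + 2) * (12 / ζ + 1))) ∧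
      (∀ i, ∀ a b : V, ∃ (u v : V) (p : H.Walk u v), H.Adj a u ∧ H.Adj b v ∧ p.IsPath ∧
        ((p.length : ℝ) ≤ 12 / ζ) ∧ ∀ x ∈ p.support, x ∈ S i) := by
  have hσ : (0:ℝ) ≤ (8/δ * Real.log n + 2) * (12 / ζ + 1) := by
    have : (0:ℝ) ≤ Real.log n := Real.log_natCast_nonneg n
    positivity
  set σ : ℝ := (8/δ * Real.log n + 2) * (12 / ζ + 1) with hσdef
  intro k
  induction k with
  | zero =>
    intro _
    refine ⟨fun i => i.elim0, fun i => i.elim0, fun i => i.elim0, ?_, fun i => i.elim0⟩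
    have : (⋃ i : Fin 0, (fun (i : Fin 0) => (∅ : Set V)) i) = (∅ : Set V) := by simp
    simp
  | succ k ih =>
    intro hbudget
    have hbk : (W.ncard : ℝ) + k * σ ≤ ζ / 100 * (δ / 8 * n) := by
      push_cast at hbudget ⊢
      nlinarith
    obtain ⟨S, hSW, hSdisj, hScard, hSgood⟩ := ih hbk
    set Z : Set V := W ∪ ⋃ i, S i with hZdef
    have hZb : (Z.ncard : ℝ) ≤ ζ / 100 * (δ / 8 * n) := by
      refine hScard.trans (le_trans ?_ hbudget)
      push_cast
      nlinarith
    obtain ⟨Snew, hSnewZ, hSnewCard, hSnewGood⟩ :=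
      web_lemma hζ hζ24 hδ hδ8 hn1 hn hns hdeg hZb
    set SS : Fin (k+1) → Set V := Fin.cons Snew S with hSS
    refine ⟨SS, ?_, ?_, ?_, ?_⟩
    · intro i
      refine Fin.cases ?_ ?_ i
      · simp only [hSS, Fin.cons_zero]
        exact hSnewZ.trans (Set.compl_subset_compl.2 Set.subset_union_left)
      · intro j
        simp only [hSS, Fin.cons_succ]
        exact hSW j
    · intro i j hij
      have hdisjZ : ∀ m : Fin k, Disjoint Snew (S m) := by
        intro m
        rw [Set.disjoint_left]
        intro x hx hxm
        exact hSnewZ hx (Or.inr (Set.mem_iUnion.mpr ⟨m, hxm⟩))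
      rcases Fin.eq_zero_or_eq_succ i with rfl | ⟨i', rfl⟩ <;>
        rcases Fin.eq_zero_or_eq_succ j with rfl | ⟨j', rfl⟩
      · exact absurd rfl hij
      · simpa [hSS] using hdisjZ j'
      · simpa [hSS] using (hdisjZ i').symm
      · simp only [hSS, Fin.cons_succ]
        exact hSdisj i' j' (fun h => hij (by rw [h]))
    · have hsub : (W ∪ ⋃ i, SS i) ⊆ Z ∪ Snew := by
        intro x hx
        rcases hx with hx | hx
        · exact Or.inl (Or.inl hx)
        · obtain ⟨i, hi⟩ := Set.mem_iUnion.mp hx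
          rcases Fin.eq_zero_or_eq_succ i with rfl | ⟨i', rfl⟩
          · exact Or.inr (by simpa [hSS] using hi)
          · exact Or.inl (Or.inr (Set.mem_iUnion.mpr ⟨i', by simpa [hSS] using hi⟩))
      have h1 : ((W ∪ ⋃ i, SS i).ncard : ℝ) ≤ ((Z ∪ Snew).ncard : ℝ) := by
        exact_mod_cast Set.ncard_le_ncard hsub (Set.toFinite _)
      have h2 : ((Z ∪ Snew).ncard : ℝ) ≤ (Z.ncard : ℝ) + Snew.ncard := by
        exact_mod_cast Set.ncard_union_le Z Snew
      push_cast
      nlinarith [hScard, hSnewCard]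
    · intro i
      refine Fin.cases ?_ ?_ i
      · simpa [hSS] using hSnewGood
      · intro j; simpa [hSS] using hSgood j

end Dom

lemma eventually_conds (K ε : ℝ) (hε : 0 < ε) :
    ∃ n₀ : ℕ, ∀ n : ℕ, n₀ ≤ n →
      (16 + 4*K ≤ Real.log n) ∧ ((Real.log n)^3 ≤ ε * n) ∧ 1 ≤ n := by
  have h1 : ∀ᶠ n : ℕ in Filter.atTop, 16 + 4*K ≤ Real.log n := by
    have := Real.tendsto_log_atTop.comp (tendsto_natCast_atTop_atTop (R := ℝ))
    exact this.eventually_ge_atTop _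
  have h2 : ∀ᶠ n : ℕ in Filter.atTop, (Real.log n)^3 ≤ ε * n := by
    have ht := (Real.tendsto_pow_log_div_mul_add_atTop 1 0 3 one_ne_zero).comp
      (tendsto_natCast_atTop_atTop (R := ℝ))
    have hev := ht.eventually_lt_const hε
    have hone : ∀ᶠ n : ℕ in Filter.atTop, (1:ℝ) ≤ n := by
      have := tendsto_natCast_atTop_atTop (R := ℝ)
      exact this.eventually_ge_atTop 1
    filter_upwards [hev, hone] with n hn h1n
    have hnpos : (0:ℝ) < n := by linarith
    have : Real.log n ^ 3 / (1 * n + 0) < ε := hn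
    rw [one_mul, add_zero, div_lt_iff₀ hnpos] at this
    nlinarith
  have h3 : ∀ᶠ n : ℕ in Filter.atTop, 1 ≤ n := Filter.eventually_ge_atTop 1
  obtain ⟨n₀, hn₀⟩ := Filter.eventually_atTop.mp ((h1.and h2).and h3)
  exact ⟨n₀, fun n hn => ⟨(hn₀ n hn).1.1, (hn₀ n hn).1.2, (hn₀ n hn).2⟩⟩

end Reservoir

set_option maxHeartbeats 1000000 in
/-- **The reservoir** (Claim 3.4): under the hierarchy `1/n ≪ ζ ≪ δ`, a graph on at most
`n` vertices with minimum degree at least `(δ/4) n` and no `(ζ/4)`-sparse cut has, for any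
four distinct prescribed vertices, a small reservoir `R` avoiding them through which any
pair of vertices outside `R` (lying in different classes if `H` is bipartite) can be
joined by many disjoint short paths; in the bipartite case `R` can be taken balanced. -/
theorem reservoir :
    ∀ δ : ℝ, 0 < δ →
    ∃ ζ₀ : ℝ, 0 < ζ₀ ∧ ∀ ζ : ℝ, 0 < ζ → ζ ≤ ζ₀ →
    ∃ n₀ : ℕ, ∀ n : ℕ, n₀ ≤ n →
    ∀ (V : Type) [Fintype V] (H : SimpleGraph V),
      Fintype.card V ≤ n →
      (∀ v : V, δ / 4 * n ≤ ({u | H.Adj v u}.ncard : ℝ)) →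
      ¬ HasSparseCut H Set.univ (ζ / 4) →
    ∀ x₀ y₀ xs ys : V,
      x₀ ≠ y₀ → x₀ ≠ xs → x₀ ≠ ys → y₀ ≠ xs → y₀ ≠ ys → xs ≠ ys →
    (∃ R : Set V, R ⊆ Set.univ \ {x₀, y₀, xs, ys} ∧
       (R.ncard : ℝ) ≤ (Real.log n) ^ 3 ∧
       ∀ a b : V, a ≠ b → a ∉ R → b ∉ R →
         (∀ X Y : Set V, IsBipartitionOf H X Y →
           (a ∈ X ∧ b ∈ Y) ∨ (a ∈ Y ∧ b ∈ X)) →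
         ManyConnectingPaths H R ζ n a b) ∧
    (∀ X Y : Set V, IsBipartitionOf H X Y →
      ∃ R : Set V, R ⊆ Set.univ \ {x₀, y₀, xs, ys} ∧
        (R.ncard : ℝ) ≤ (Real.log n) ^ 3 ∧
        (R ∩ X).ncard = (R ∩ Y).ncard ∧
        ∀ a b : V, a ≠ b → a ∉ R → b ∉ R →
          ((a ∈ X ∧ b ∈ Y) ∨ (a ∈ Y ∧ b ∈ X)) →
          ManyConnectingPaths H R ζ n a b) := by
  intro δ hδ
  refine ⟨1/24, by norm_num, ?_⟩
  intro ζ hζ hζ24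
  have hK : (0:ℝ) < 2*(8/δ+2)*(12/ζ+1) := by positivity
  set K : ℝ := 2*(8/δ+2)*(12/ζ+1) with hKdef
  have hε : (0:ℝ) < (ζ*δ/800)/(4+K) := by positivity
  set ε : ℝ := (ζ*δ/800)/(4+K) with hεdef
  obtain ⟨n₀, hn₀⟩ := eventually_conds K ε hε
  refine ⟨n₀, ?_⟩
  intro n hn V _ H hcard hdeg hns x₀ y₀ xs ys hxy hxxs hxys hyxs hyys hxsys
  classical
  obtain ⟨hLK, hcube, hn1⟩ := hn₀ n hn
  set L := Real.log n with hLdef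
  have hL16 : 16 ≤ L := by nlinarith
  have hL1 : 1 ≤ L := by linarith
  have hnR : (1:ℝ) ≤ n := by exact_mod_cast hn1
  have hVlarge := card_V_large hdeg x₀
  have hcardR : (Fintype.card V : ℝ) ≤ n := by exact_mod_cast hcard
  have hδ8 : δ/8 < 1 := by nlinarith
  set W : Set V := {x₀, y₀, xs, ys} with hWdef
  have hW4 : (W.ncard : ℝ) ≤ 4 := by
    have h1 : W.ncard ≤ ({y₀, xs, ys} : Set V).ncard + 1 := Set.ncard_insert_le _ _
    have h2 : ({y₀, xs, ys} : Set V).ncard ≤ ({xs, ys} : Set V).ncard + 1 :=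
      Set.ncard_insert_le _ _
    have h3 : ({xs, ys} : Set V).ncard ≤ ({ys} : Set V).ncard + 1 := Set.ncard_insert_le _ _
    have h4 : ({ys} : Set V).ncard = 1 := Set.ncard_singleton _
    have : W.ncard ≤ 4 := by omega
    exact_mod_cast this
  set k : ℕ := ⌊L⌋₊ + 1 with hkdef
  set σ : ℝ := (8/δ * L + 2) * (12/ζ + 1) with hσdef
  have hσ0 : 0 ≤ σ := by
    have : (0:ℝ) ≤ L := by linarith
    positivity
  have hkL : (k:ℝ) ≤ 2*L := by
    have h1 : (⌊L⌋₊ : ℝ) ≤ L := Nat.floor_le (by linarith)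
    push_cast [hkdef]
    linarith
  have hk0 : (0:ℝ) ≤ (k:ℝ) := by positivity
  have hσle : σ ≤ (8/δ+2)*L*(12/ζ+1) := by
    have h2L : 2 ≤ 2*L := by linarith
    have : 8/δ * L + 2 ≤ (8/δ+2)*L := by nlinarith [div_pos (by norm_num : (0:ℝ) < 8) hδ]
    nlinarith [this, (by positivity : (0:ℝ) < 12/ζ+1)]
  have hkσ : (k:ℝ)*σ ≤ K*L^2 := by
    have h1 : (k:ℝ)*σ ≤ (2*L)*((8/δ+2)*L*(12/ζ+1)) := by
      refine mul_le_mul hkL hσle hσ0 (by linarith)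
    calc (k:ℝ)*σ ≤ (2*L)*((8/δ+2)*L*(12/ζ+1)) := h1
      _ = K*L^2 := by rw [hKdef]; ring
  have hεK : (4+K)*ε = ζ*δ/800 := by
    rw [hεdef]
    field_simp
  have hL2 : (1:ℝ) ≤ L^2 := by nlinarith
  have hL3 : (1:ℝ) ≤ L^3 := by nlinarith
  have hKL3 : 4 + K*L^2 ≤ (4+K)*L^3 := by
    have e1 : (0:ℝ) ≤ K*(L^2)*(L-1) := mul_nonneg (mul_nonneg hK.le (sq_nonneg L)) (by linarith)
    nlinarith [e1, hL3]
  have hfin : (4+K)*L^3 ≤ (4+K)*(ε*n) :=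
    mul_le_mul_of_nonneg_left hcube (by positivity)
  have hζδn : 4 + K*L^2 ≤ ζ*δ/800*(n:ℝ) := by
    nlinarith [hεK, hfin, hKL3]
  have hbudget : (W.ncard:ℝ) + k*σ ≤ ζ/100*(δ/8*n) := by
    have heq : ζ/100*(δ/8*(n:ℝ)) = ζ*δ/800*n := by ring
    rw [heq]
    linarith [hW4, hkσ, hζδn]
  obtain ⟨S, hSW, hSdisj, hScard, hSgood⟩ :=
    webs_iter hζ hζ24 hδ hδ8 hn1 hcard hns hdeg W k hbudget
  rw [← hσdef] at hScard
  set R : Set V := ⋃ i, S i with hRdef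
  have hsubR : R ⊆ Set.univ \ W := by
    intro x hx
    obtain ⟨i, hi⟩ := Set.mem_iUnion.mp hx
    exact ⟨trivial, hSW i hi⟩
  have hRallcard : ((W ∪ R).ncard : ℝ) ≤ 4 + K*L^2 := by
    refine hScard.trans ?_
    linarith [hkσ, hW4]
  have hRcard0 : (R.ncard : ℝ) ≤ 4 + K*L^2 := by
    refine le_trans ?_ hRallcard
    exact_mod_cast Set.ncard_le_ncard Set.subset_union_right (Set.toFinite _)
  have hnum : 2*(4 + K*L^2) ≤ L^3 := by
    nlinarith [mul_le_mul_of_nonneg_right hLK (sq_nonneg L), hL2, hK]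
  -- many connecting paths through any superset of R
  have hMCP : ∀ R' : Set V, R ⊆ R' → ∀ a b : V, ManyConnectingPaths H R' ζ n a b := by
    intro R' hRR' a b
    choose uf vf pw hau hbv hpath hlen hsupp using fun i => hSgood i a b
    refine ⟨k, ?_, uf, vf, pw, hpath, ?_, hlen, fun i => ⟨hau i, hbv i⟩, ?_⟩
    · have := Nat.lt_floor_add_one L
      rw [hkdef]
      push_cast
      linarith
    · intro i x hx
      exact hRR' (Set.mem_iUnion.mpr ⟨i, hsupp i x hx⟩)
    · intro i j hij x hxi hxj
      exact Set.disjoint_left.mp (hSdisj i j hij) (hsupp i x hxi) (hsupp j x hxj)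
  constructor
  · refine ⟨R, hsubR, ?_, fun a b _ _ _ _ => hMCP R subset_rfl a b⟩
    linarith [hRcard0, hnum]
  · -- bipartite part
    have hXnonempty : ∀ X Y : Set V, IsBipartitionOf H X Y → X.Nonempty ∧ Y.Nonempty := by
      rintro X Y ⟨hXY, hd, hcross⟩
      have hne : ({u | H.Adj x₀ u}).Nonempty := by
        rw [← Set.ncard_pos (Set.toFinite _)]
        have h1 := hdeg x₀
        have h2 : (0:ℝ) < δ/4*n := by positivity
        have : (0:ℝ) < ({u | H.Adj x₀ u}.ncard : ℝ) := lt_of_lt_of_le h2 h1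
        exact_mod_cast this
      obtain ⟨u, hu⟩ := hne
      rcases hcross x₀ u hu with ⟨h1, h2⟩ | ⟨h1, h2⟩
      · exact ⟨⟨x₀, h1⟩, ⟨u, h2⟩⟩
      · exact ⟨⟨u, h2⟩, ⟨x₀, h1⟩⟩
    have hclassbound : ∀ X Y : Set V, IsBipartitionOf H X Y → ∀ y ∈ Y,
        δ/4*n ≤ (X.ncard:ℝ) := by
      rintro X Y ⟨hXY, hd, hcross⟩ y hy
      have hsub : {u | H.Adj y u} ⊆ X := by
        intro u hu
        rcases hcross y u hu with ⟨h1, h2⟩ | ⟨h1, h2⟩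
        · exact absurd hy (Set.disjoint_left.mp hd h1)
        · exact h2
      refine (hdeg y).trans ?_
      exact_mod_cast Set.ncard_le_ncard hsub (Set.toFinite _)
    have pad : ∀ X Y : Set V, IsBipartitionOf H X Y → (R∩X).ncard ≤ (R∩Y).ncard →
        ∃ R' : Set V, R ⊆ R' ∧ R' ⊆ Set.univ \ W ∧ ((R'.ncard:ℝ) ≤ L^3) ∧
          (R'∩X).ncard = (R'∩Y).ncard := by
      intro X Y hbip hle
      obtain ⟨hXne, hYne⟩ := hXnonempty X Y hbip
      obtain ⟨y, hy⟩ := hYne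
      have hXb : δ/4*n ≤ (X.ncard:ℝ) := hclassbound X Y hbip y hy
      have hdY : ((R∩Y).ncard:ℝ) ≤ 4 + K*L^2 := by
        refine le_trans ?_ hRcard0
        exact_mod_cast Set.ncard_le_ncard Set.inter_subset_left (Set.toFinite _)
      -- availability of padding vertices in X
      have hXdiff : (X.ncard:ℝ) ≤ ((X \ (W ∪ R)).ncard:ℝ) + ((W ∪ R).ncard:ℝ) := by
        have h1 : X ⊆ (X \ (W ∪ R)) ∪ (W ∪ R) := by
          intro x hx
          by_cases h : x ∈ W ∪ R
          · exact Or.inr h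
          · exact Or.inl ⟨hx, h⟩
        have := le_trans (Set.ncard_le_ncard h1 (Set.toFinite _))
          (Set.ncard_union_le _ _)
        exact_mod_cast this
      have hsmall : 2*(4 + K*L^2) ≤ δ/4*(n:ℝ) := by
        have hn0 : (0:ℝ) ≤ (n:ℝ) := by linarith
        have hdn : (0:ℝ) ≤ δ*(n:ℝ) := by positivity
        nlinarith [hζδn, mul_le_mul_of_nonneg_right hζ24 hdn]
      have havail : ((R∩Y).ncard - (R∩X).ncard : ℕ) ≤ (X \ (W ∪ R)).ncard := by
        have h1 : (((R∩Y).ncard - (R∩X).ncard : ℕ) : ℝ) ≤ ((R∩Y).ncard : ℝ) := by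
          have := Nat.sub_le ((R∩Y).ncard) ((R∩X).ncard)
          exact_mod_cast this
        have h2 : (((R∩Y).ncard - (R∩X).ncard : ℕ) : ℝ) ≤ ((X \ (W ∪ R)).ncard : ℝ) := by
          linarith [hXdiff, hRallcard, hdY, hsmall]
        exact_mod_cast h2
      obtain ⟨Q, hQsub, hQcard⟩ := Set.exists_subset_card_eq havail
      have hQX : Q ⊆ X := hQsub.trans Set.diff_subset
      have hQWR : ∀ q ∈ Q, q ∉ W ∪ R := fun q hq => (hQsub hq).2
      refine ⟨R ∪ Q, Set.subset_union_left, ?_, ?_, ?_⟩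
      · intro x hx
        rcases hx with hx | hx
        · exact hsubR hx
        · exact ⟨trivial, fun h => hQWR x hx (Or.inl h)⟩
      · have h1 : ((R ∪ Q).ncard : ℝ) ≤ (R.ncard : ℝ) + (Q.ncard : ℝ) := by
          exact_mod_cast Set.ncard_union_le R Q
        have h2 : ((Q.ncard : ℕ) : ℝ) ≤ ((R∩Y).ncard : ℝ) := by
          rw [hQcard]
          have := Nat.sub_le ((R∩Y).ncard) ((R∩X).ncard)
          exact_mod_cast this
        linarith [hRcard0, hdY, hnum, h2]
      · have hQR : Disjoint Q R := by
          rw [Set.disjoint_left]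
          exact fun q hq hqR => hQWR q hq (Or.inr hqR)
        have heqX : (R ∪ Q) ∩ X = (R ∩ X) ∪ Q := by
          rw [Set.union_inter_distrib_right, Set.inter_eq_left.mpr hQX]
        have heqY : (R ∪ Q) ∩ Y = R ∩ Y := by
          rw [Set.union_inter_distrib_right]
          have : Q ∩ Y = ∅ := by
            rw [Set.eq_empty_iff_forall_notMem]
            rintro q ⟨hqQ, hqY⟩
            exact Set.disjoint_left.mp hbip.2.1 (hQX hqQ) hqY
          rw [this, Set.union_empty]
        rw [heqX, heqY]
        have hdisj2 : Disjoint (R ∩ X) Q := by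
          rw [Set.disjoint_left]
          exact fun x hx hxQ => Set.disjoint_left.mp hQR hxQ hx.1
        rw [Set.ncard_union_eq hdisj2 (Set.toFinite _) (Set.toFinite _), hQcard]
        omega
    intro X Y hbip
    rcases le_total ((R∩X).ncard) ((R∩Y).ncard) with hle | hle
    · obtain ⟨R', hRR', hsub', hcard', hbal'⟩ := pad X Y hbip hle
      exact ⟨R', hsub', hcard', hbal', fun a b _ _ _ _ => hMCP R' hRR' a b⟩
    · have hbip' : IsBipartitionOf H Y X := by
        obtain ⟨h1, h2, h3⟩ := hbip
        exact ⟨by rw [Set.union_comm]; exact h1, h2.symm, fun u v h => (h3 u v h).symm⟩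
      obtain ⟨R', hRR', hsub', hcard', hbal'⟩ := pad Y X hbip' hle
      exact ⟨R', hsub', hcard', hbal'.symm, fun a b _ _ _ _ => hMCP R' hRR' a b⟩
end
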